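/- arXiv:1909.11776 — 6 statements merged into one kernel-verified Lean document; each statement's English description precedes it below -/
import Mathlib

section
/- Let W be a connected graphon whose degree function k satisfies k(x) ≥ c for all x ∈ [0,1], where c > 0, and let g ∈ L²[0,1] satisfy g ≥ 0 almost everywhere. Then for every t ≥ 0 the solution w(t) = e^{t ℒ^{rw}} g of the random-walk evolution equation satisfies w(t) ≥ 0 almost everywhere on [0,1]. -/
open MeasureTheory Set Filter

set_option maxHeartbeats 2000000
set_option synthInstance.maxHeartbeats 400000

noncomputable section

/-- The unit interval `[0,1]` as a subset of `ℝ`. -/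
abbrev I01 : Set ℝ := Set.Icc 0 1

/-- Lebesgue measure restricted to `[0,1]`. -/
abbrev μ01 : MeasureTheory.Measure ℝ := MeasureTheory.volume.restrict I01

/-- `L²[0,1]`. -/
abbrev L2 := MeasureTheory.Lp ℝ 2 μ01

/-- Positivity of solutions.  Let `W` be a connected graphon whose degree
function satisfies `k ≥ c > 0`, let `𝒦` be the integral operator on `L²[0,1]`
with kernel `K x y = W x y / k y`, and let `ℒ = 𝒦 - I`.  If `g ∈ L²[0,1]`
satisfies `g ≥ 0` a.e., then for every `t ≥ 0` the solution
`w t = e^{tℒ} g` of the random-walk evolution equation satisfies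
`w t ≥ 0` a.e. on `[0,1]`. -/
theorem random_walk_evolution_positivity
    (W : ℝ → ℝ → ℝ)
    (hWmeas : Measurable (Function.uncurry W))
    (hWsymm : ∀ x ∈ I01, ∀ y ∈ I01, W x y = W y x)
    (hWrange : ∀ x ∈ I01, ∀ y ∈ I01, W x y ∈ Set.Icc (0 : ℝ) 1)
    (hWconn : ∀ S : Set ℝ, MeasurableSet S → S ⊆ I01 →
      0 < volume S → volume S < 1 →
      0 < ∫ x in S, ∫ y in I01 \ S, W x y)
    (c : ℝ) (hc : 0 < c)
    (hk : ∀ x ∈ I01, c ≤ ∫ y in I01, W x y)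
    (Kop : L2 →L[ℝ] L2)
    (hKop : ∀ f : L2, (Kop f : ℝ → ℝ) =ᵐ[μ01]
      fun x => ∫ y in I01, (W x y / ∫ z in I01, W y z) * f y)
    (g : L2) (hg : 0 ≤ᵐ[μ01] (g : ℝ → ℝ)) :
    ∀ t : ℝ, 0 ≤ t →
      0 ≤ᵐ[μ01] (NormedSpace.exp (t • (Kop - 1)) g : ℝ → ℝ) := by
  -- smul by nonneg scalars preserves nonnegativity in L2
  have hsmul : ∀ (a : ℝ) (f : L2), 0 ≤ a → 0 ≤ f → 0 ≤ a • f := by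
    intro a f ha hf
    rw [← MeasureTheory.Lp.coeFn_nonneg] at hf ⊢
    filter_upwards [hf, MeasureTheory.Lp.coeFn_smul a f] with x hx h2
    rw [h2]
    exact mul_nonneg ha hx
  -- Kop preserves nonnegativity
  have hKpos : ∀ f : L2, 0 ≤ f → 0 ≤ Kop f := by
    intro f hf
    rw [← MeasureTheory.Lp.coeFn_nonneg] at hf ⊢
    filter_upwards [hKop f, ae_restrict_mem (measurableSet_Icc : MeasurableSet I01)]
      with x hx hxI
    rw [hx]
    refine integral_nonneg_of_ae ?_
    filter_upwards [hf, ae_restrict_mem (measurableSet_Icc : MeasurableSet I01)]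
      with y hy hyI
    have hW : 0 ≤ W x y := (hWrange x hxI y hyI).1
    have hd : 0 ≤ ∫ z in I01, W y z := le_trans hc.le (hk y hyI)
    exact mul_nonneg (div_nonneg hW hd) hy
  have hg' : 0 ≤ g := (MeasureTheory.Lp.coeFn_nonneg _).mp hg
  intro t ht
  have hKn : ∀ n : ℕ, 0 ≤ (Kop ^ n) g := by
    intro n; induction n with
    | zero => simpa using hg'
    | succ n ih =>
      have h : (Kop ^ (n + 1)) g = Kop ((Kop ^ n) g) := by
        rw [pow_succ']; rfl
      rw [h]; exact hKpos _ ih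
  -- exp (t • Kop) g ≥ 0
  have hexpK : 0 ≤ NormedSpace.exp (t • Kop) g := by
    rw [NormedSpace.exp_eq_tsum ℝ]
    have hsum : Summable (fun n : ℕ => ((n.factorial : ℝ)⁻¹) • (t • Kop) ^ n) :=
      NormedSpace.expSeries_summable' (t • Kop)
    show 0 ≤ (ContinuousLinearMap.apply ℝ (↥L2) g)
      (∑' n : ℕ, ((n.factorial : ℝ)⁻¹) • (t • Kop) ^ n)
    rw [(ContinuousLinearMap.apply ℝ (↥L2) g).map_tsum hsum]
    refine tsum_nonneg fun n => ?_
    show (0 : L2) ≤ (((n.factorial : ℝ)⁻¹) • (t • Kop) ^ n) g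
    rw [smul_pow]
    show (0 : L2) ≤ ((n.factorial : ℝ)⁻¹) • ((t ^ n) • ((Kop ^ n) g))
    refine hsmul _ _ (by positivity) (hsmul _ _ (by positivity) (hKn n))
  -- split the exponential
  have hsplit : NormedSpace.exp (t • (Kop - 1)) =
      NormedSpace.exp (t • Kop) * NormedSpace.exp (-(t • (1 : L2 →L[ℝ] L2))) := by
    letI : NormedAlgebra ℚ (L2 →L[ℝ] L2) := .restrictScalars ℚ ℝ _
    rw [← NormedSpace.exp_add_of_commute]
    · congr 1
      rw [smul_sub, sub_eq_add_neg]
    · exact (((Commute.one_right Kop).smul_left t).smul_right t).neg_right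
  have hexp1 : NormedSpace.exp (-(t • (1 : L2 →L[ℝ] L2))) =
      Real.exp (-t) • (1 : L2 →L[ℝ] L2) := by
    have h1 : -(t • (1 : L2 →L[ℝ] L2)) = algebraMap ℝ (L2 →L[ℝ] L2) (-t) := by
      rw [Algebra.algebraMap_eq_smul_one, neg_smul]
    rw [h1, ← NormedSpace.algebraMap_exp_comm, Algebra.algebraMap_eq_smul_one,
      Real.exp_eq_exp_ℝ]
  have : NormedSpace.exp (t • (Kop - 1)) g =
      Real.exp (-t) • (NormedSpace.exp (t • Kop) g) := by
    rw [hsplit, hexp1]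
    simp [ContinuousLinearMap.mul_apply, _root_.map_smul]
  rw [MeasureTheory.Lp.coeFn_nonneg, this]
  exact hsmul _ _ (Real.exp_nonneg _) hexpK
end
end

section
/- Let U and W be graphons whose degree functions k_U and k_W satisfy k_U(x) ≥ c and k_W(x) ≥ c for all x ∈ [0,1], where c > 0. Let K_U(x,y) = U(x,y)/k_U(y) and K_W(x,y) = W(x,y)/k_W(y) be the corresponding random-walk kernels. Then ‖K_U − K_W‖_{L²([0,1]²)} ≤ (2/c²) ‖U − W‖_{L²([0,1]²)}. -/
open MeasureTheory Set Filter
open scoped ENNReal NNReal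

noncomputable section

lemma aux_pointwise (a b ku kw c : ℝ) (hc : 0 < c) (hb0 : 0 ≤ b) (hb1 : b ≤ 1)
    (hku : c ≤ ku) (hkw : c ≤ kw) :
    |a / ku - b / kw| ≤ |a - b| / c + |ku - kw| / c ^ 2 := by
  have hku0 : 0 < ku := hc.trans_le hku
  have hkw0 : 0 < kw := hc.trans_le hkw
  have key : a / ku - b / kw = (a - b) / ku + b * (kw - ku) / (ku * kw) := by
    field_simp
    ring
  calc |a / ku - b / kw| ≤ |(a - b) / ku| + |b * (kw - ku) / (ku * kw)| := by
        rw [key]; exact abs_add_le _ _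
    _ ≤ |a - b| / c + |ku - kw| / c ^ 2 := by
        have h1 : |(a - b) / ku| ≤ |a - b| / c := by
          rw [abs_div, abs_of_pos hku0]
          gcongr
        have h2 : |b * (kw - ku) / (ku * kw)| ≤ |ku - kw| / c ^ 2 := by
          rw [abs_div, abs_mul, abs_of_nonneg hb0, abs_of_pos (mul_pos hku0 hkw0),
            abs_sub_comm kw ku]
          calc b * |ku - kw| / (ku * kw) ≤ 1 * |ku - kw| / (c * c) := by
                gcongr
            _ = |ku - kw| / c ^ 2 := by ring
        linarith

lemma eLpNorm_abs_div_const {α : Type*} [MeasurableSpace α] (μ : Measure α)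
    (f : α → ℝ) (c : ℝ) (hc : 0 < c) :
    eLpNorm (fun x => |f x| / c) 2 μ = ENNReal.ofReal (1 / c) * eLpNorm f 2 μ := by
  have h : (fun x => |f x| / c) = (1 / c) • (fun x => ‖f x‖) := by
    ext x
    simp [Real.norm_eq_abs, div_eq_inv_mul, mul_comm]
  rw [h, eLpNorm_const_smul, eLpNorm_norm]
  congr 1
  rw [← Real.enorm_eq_ofReal (by positivity : (0:ℝ) ≤ 1 / c)]

/-- Let `U`, `W` be graphons whose degree functions `k_U`, `k_W` are bounded
below by `c > 0` on `[0,1]`, and let `K_U x y = U x y / k_U y` and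
`K_W x y = W x y / k_W y` be the random-walk kernels.  Then
`‖K_U - K_W‖_{L²([0,1]²)} ≤ (2/c²) ‖U - W‖_{L²([0,1]²)}`. -/
theorem random_walk_kernel_L2_bound
    (U W : ℝ → ℝ → ℝ)
    (hUmeas : Measurable (Function.uncurry U))
    (hUsymm : ∀ x ∈ I01, ∀ y ∈ I01, U x y = U y x)
    (hUrange : ∀ x ∈ I01, ∀ y ∈ I01, U x y ∈ Set.Icc (0 : ℝ) 1)
    (hWmeas : Measurable (Function.uncurry W))
    (hWsymm : ∀ x ∈ I01, ∀ y ∈ I01, W x y = W y x)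
    (hWrange : ∀ x ∈ I01, ∀ y ∈ I01, W x y ∈ Set.Icc (0 : ℝ) 1)
    (c : ℝ) (hc : 0 < c)
    (hkU : ∀ x ∈ I01, c ≤ ∫ y in I01, U x y)
    (hkW : ∀ x ∈ I01, c ≤ ∫ y in I01, W x y) :
    eLpNorm (fun q : ℝ × ℝ =>
        U q.1 q.2 / (∫ z in I01, U q.2 z) - W q.1 q.2 / (∫ z in I01, W q.2 z))
        2 (μ01.prod μ01) ≤
      ENNReal.ofReal (2 / c ^ 2) *
        eLpNorm (fun q : ℝ × ℝ => U q.1 q.2 - W q.1 q.2) 2 (μ01.prod μ01) := by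
  have h0mem : (0:ℝ) ∈ I01 := ⟨le_refl 0, zero_le_one⟩
  -- measurability facts
  have mU : Measurable fun q : ℝ × ℝ => U q.1 q.2 := hUmeas
  have mW : Measurable fun q : ℝ × ℝ => W q.1 q.2 := hWmeas
  have mD : Measurable fun q : ℝ × ℝ => U q.1 q.2 - W q.1 q.2 := mU.sub mW
  have mkU : Measurable fun y : ℝ => ∫ z in I01, U y z :=
    (hUmeas.stronglyMeasurable.integral_prod_right' (ν := μ01)).measurable
  have mkW : Measurable fun y : ℝ => ∫ z in I01, W y z :=
    (hWmeas.stronglyMeasurable.integral_prod_right' (ν := μ01)).measurable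
  have mΔ : Measurable fun y : ℝ => (∫ z in I01, U y z) - ∫ z in I01, W y z := mkU.sub mkW
  -- integrability of slices
  have intU : ∀ x ∈ I01, Integrable (fun y => U x y) μ01 := by
    intro x hx
    have hm : Measurable fun y => U x y :=
      hUmeas.comp (measurable_const.prodMk measurable_id)
    refine (integrable_const (1:ℝ)).mono' hm.aestronglyMeasurable ?_
    filter_upwards [ae_restrict_mem measurableSet_Icc] with y hy
    rw [Real.norm_eq_abs, abs_of_nonneg (hUrange x hx y hy).1]
    exact (hUrange x hx y hy).2
  have intW : ∀ x ∈ I01, Integrable (fun y => W x y) μ01 := by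
    intro x hx
    have hm : Measurable fun y => W x y :=
      hWmeas.comp (measurable_const.prodMk measurable_id)
    refine (integrable_const (1:ℝ)).mono' hm.aestronglyMeasurable ?_
    filter_upwards [ae_restrict_mem measurableSet_Icc] with y hy
    rw [Real.norm_eq_abs, abs_of_nonneg (hWrange x hx y hy).1]
    exact (hWrange x hx y hy).2
  -- c ≤ 1
  have kU_le_one : ∀ x ∈ I01, (∫ z in I01, U x z) ≤ 1 := by
    intro x hx
    calc (∫ z in I01, U x z) ≤ ∫ z in I01, (1:ℝ) :=
          setIntegral_mono_on (intU x hx) (integrable_const 1) measurableSet_Icc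
            (fun y hy => (hUrange x hx y hy).2)
      _ = 1 := by simp
  have hc1 : c ≤ 1 := (hkU 0 h0mem).trans (kU_le_one 0 h0mem)
  -- a.e. membership in the square
  have hprod_ae : ∀ᵐ q : ℝ × ℝ ∂(μ01.prod μ01), q ∈ I01 ×ˢ I01 := by
    rw [Measure.prod_restrict]
    exact ae_restrict_mem (measurableSet_Icc.prod measurableSet_Icc)
  set N := eLpNorm (fun q : ℝ × ℝ => U q.1 q.2 - W q.1 q.2) 2 (μ01.prod μ01) with hN
  -- step 1: pointwise domination
  have step1 : eLpNorm (fun q : ℝ × ℝ =>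
        U q.1 q.2 / (∫ z in I01, U q.2 z) - W q.1 q.2 / (∫ z in I01, W q.2 z))
        2 (μ01.prod μ01) ≤
      eLpNorm (fun q : ℝ × ℝ =>
        |U q.1 q.2 - W q.1 q.2| / c +
          |(∫ z in I01, U q.2 z) - ∫ z in I01, W q.2 z| / c ^ 2) 2 (μ01.prod μ01) := by
    refine eLpNorm_mono_ae ?_
    filter_upwards [hprod_ae] with q hq
    obtain ⟨hq1, hq2⟩ := hq
    have hb := hWrange q.1 hq1 q.2 hq2
    rw [Real.norm_eq_abs, Real.norm_eq_abs]
    have hbound := aux_pointwise (U q.1 q.2) (W q.1 q.2) (∫ z in I01, U q.2 z)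
      (∫ z in I01, W q.2 z) c hc hb.1 hb.2 (hkU q.2 hq2) (hkW q.2 hq2)
    refine hbound.trans (le_of_eq ?_)
    exact (abs_of_nonneg (by positivity)).symm
  -- step 2: triangle inequality
  have meas_g1 : AEStronglyMeasurable
      (fun q : ℝ × ℝ => |U q.1 q.2 - W q.1 q.2| / c) (μ01.prod μ01) :=
    ((mD.abs).div_const c).aestronglyMeasurable
  have meas_g2 : AEStronglyMeasurable
      (fun q : ℝ × ℝ => |(∫ z in I01, U q.2 z) - ∫ z in I01, W q.2 z| / c ^ 2)
      (μ01.prod μ01) :=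
    (((mΔ.comp measurable_snd).abs).div_const (c ^ 2)).aestronglyMeasurable
  have step2 : eLpNorm (fun q : ℝ × ℝ =>
        |U q.1 q.2 - W q.1 q.2| / c +
          |(∫ z in I01, U q.2 z) - ∫ z in I01, W q.2 z| / c ^ 2) 2 (μ01.prod μ01) ≤
      eLpNorm (fun q : ℝ × ℝ => |U q.1 q.2 - W q.1 q.2| / c) 2 (μ01.prod μ01) +
      eLpNorm (fun q : ℝ × ℝ =>
        |(∫ z in I01, U q.2 z) - ∫ z in I01, W q.2 z| / c ^ 2) 2 (μ01.prod μ01) :=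
    eLpNorm_add_le meas_g1 meas_g2 one_le_two
  -- step 3: constants out
  have step3 : eLpNorm (fun q : ℝ × ℝ => |U q.1 q.2 - W q.1 q.2| / c) 2 (μ01.prod μ01)
      = ENNReal.ofReal (1 / c) * N :=
    eLpNorm_abs_div_const _ _ _ hc
  have step3' : eLpNorm (fun q : ℝ × ℝ =>
        |(∫ z in I01, U q.2 z) - ∫ z in I01, W q.2 z| / c ^ 2) 2 (μ01.prod μ01)
      = ENNReal.ofReal (1 / c ^ 2) *
        eLpNorm (fun q : ℝ × ℝ => (∫ z in I01, U q.2 z) - ∫ z in I01, W q.2 z)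
          2 (μ01.prod μ01) :=
    eLpNorm_abs_div_const _ _ _ (by positivity)
  -- step 4: Jensen / Cauchy-Schwarz step
  have step4 : eLpNorm (fun q : ℝ × ℝ => (∫ z in I01, U q.2 z) - ∫ z in I01, W q.2 z)
      2 (μ01.prod μ01) ≤ N := by
    rw [hN, eLpNorm_eq_lintegral_rpow_enorm_toReal two_ne_zero ENNReal.ofNat_ne_top,
      eLpNorm_eq_lintegral_rpow_enorm_toReal two_ne_zero ENNReal.ofNat_ne_top]
    refine ENNReal.rpow_le_rpow ?_ (by norm_num)
    have htoReal : (2 : ℝ≥0∞).toReal = (2:ℝ) := by simp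
    rw [htoReal]
    have mfsq : Measurable fun q : ℝ × ℝ =>
        ‖(∫ z in I01, U q.2 z) - ∫ z in I01, W q.2 z‖ₑ ^ (2:ℝ) :=
      ((mΔ.comp measurable_snd).enorm).pow_const _
    have mDsq : Measurable fun q : ℝ × ℝ =>
        ‖U q.1 q.2 - W q.1 q.2‖ₑ ^ (2:ℝ) :=
      (mD.enorm).pow_const _
    rw [lintegral_prod _ mfsq.aemeasurable, lintegral_prod _ mDsq.aemeasurable]
    have huniv : μ01 Set.univ = 1 := by
      simp [Measure.restrict_apply_univ, Real.volume_Icc]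
    -- inner integral is constant in the first variable
    have hpoint : ∀ᵐ y ∂μ01,
        ‖(∫ z in I01, U y z) - ∫ z in I01, W y z‖ₑ ^ (2:ℝ)
          ≤ ∫⁻ z, ‖U y z - W y z‖ₑ ^ (2:ℝ) ∂μ01 := by
      filter_upwards [ae_restrict_mem measurableSet_Icc] with y hy
      have hint : (∫ z in I01, U y z) - ∫ z in I01, W y z
          = ∫ z in I01, (U y z - W y z) := (integral_sub (intU y hy) (intW y hy)).symm
      have h1 : ‖(∫ z in I01, U y z) - ∫ z in I01, W y z‖ₑ
          ≤ ∫⁻ z, ‖U y z - W y z‖ₑ ∂μ01 := by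
        rw [hint]
        exact enorm_integral_le_lintegral_enorm _
      have mfy : AEMeasurable (fun z => ‖U y z - W y z‖ₑ) μ01 :=
        ((hUmeas.comp (measurable_const.prodMk measurable_id)).sub
          (hWmeas.comp (measurable_const.prodMk measurable_id))).enorm.aemeasurable
      have h2 : ∫⁻ z, ‖U y z - W y z‖ₑ ∂μ01
          ≤ (∫⁻ z, ‖U y z - W y z‖ₑ ^ (2:ℝ) ∂μ01) ^ (1/2:ℝ) := by
        have hconj : Real.HolderConjugate 2 2 := Real.HolderConjugate.two_two
        have := ENNReal.lintegral_mul_le_Lp_mul_Lq μ01 hconj mfy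
          (aemeasurable_const (b := (1:ℝ≥0∞)))
        simpa [huniv, ENNReal.one_rpow] using this
      calc ‖(∫ z in I01, U y z) - ∫ z in I01, W y z‖ₑ ^ (2:ℝ)
          ≤ ((∫⁻ z, ‖U y z - W y z‖ₑ ^ (2:ℝ) ∂μ01) ^ (1/2:ℝ)) ^ (2:ℝ) :=
            ENNReal.rpow_le_rpow (h1.trans h2) (by norm_num)
        _ = ∫⁻ z, ‖U y z - W y z‖ₑ ^ (2:ℝ) ∂μ01 := by
            rw [← ENNReal.rpow_mul]
            norm_num
    calc ∫⁻ x, ∫⁻ y,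
          ‖(∫ z in I01, U y z) - ∫ z in I01, W y z‖ₑ ^ (2:ℝ) ∂μ01 ∂μ01
        = ∫⁻ y, ‖(∫ z in I01, U y z) - ∫ z in I01, W y z‖ₑ ^ (2:ℝ) ∂μ01 := by
          rw [lintegral_const, huniv, mul_one]
      _ ≤ ∫⁻ y, (∫⁻ z, ‖U y z - W y z‖ₑ ^ (2:ℝ) ∂μ01) ∂μ01 :=
          lintegral_mono_ae hpoint
      _ = ∫⁻ x, ∫⁻ y, ‖U x y - W x y‖ₑ ^ (2:ℝ) ∂μ01 ∂μ01 := rfl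
  -- put it all together
  calc eLpNorm (fun q : ℝ × ℝ =>
        U q.1 q.2 / (∫ z in I01, U q.2 z) - W q.1 q.2 / (∫ z in I01, W q.2 z))
        2 (μ01.prod μ01)
      ≤ ENNReal.ofReal (1 / c) * N + ENNReal.ofReal (1 / c ^ 2) *
          eLpNorm (fun q : ℝ × ℝ => (∫ z in I01, U q.2 z) - ∫ z in I01, W q.2 z)
            2 (μ01.prod μ01) := by
        rw [← step3, ← step3']
        exact step1.trans step2
    _ ≤ ENNReal.ofReal (1 / c) * N + ENNReal.ofReal (1 / c ^ 2) * N := by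
        gcongr
    _ ≤ ENNReal.ofReal (2 / c ^ 2) * N := by
        rw [← add_mul]
        gcongr
        rw [← ENNReal.ofReal_add (by positivity) (by positivity)]
        refine ENNReal.ofReal_le_ofReal ?_
        have h1c : 1 / c ≤ 1 / c ^ 2 := by
          rw [div_le_div_iff₀ hc (by positivity)]
          nlinarith
        have h2 : (2:ℝ) / c ^ 2 = 1 / c ^ 2 + 1 / c ^ 2 := by ring
        linarith
end
end

section
/- Let K, K' ∈ L²([0,1]²) be kernels with ‖K‖_{L²([0,1]²)} ≤ β and ‖K'‖_{L²([0,1]²)} ≤ β for some constant β ≥ 1, let 𝒦, 𝒦' be the associated integral operators on L²[0,1], and let g, g' ∈ L²[0,1]. Then for every t ≥ 0: ‖e^{t(𝒦' − I)} g' − e^{t(𝒦 − I)} g‖₂ ≤ ‖g' − g‖₂ (e^t + e^{2βt}) + ‖K' − K‖_{L²([0,1]²)} ‖g‖₂ · t e^{2βt}. -/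
open MeasureTheory Set Filter

noncomputable section

section ExpLemmas

variable {𝔸 : Type*} [NormedRing 𝔸] [NormedAlgebra ℝ 𝔸] [CompleteSpace 𝔸]

lemma my_norm_pow_le (h1 : ‖(1:𝔸)‖ ≤ 1) (x : 𝔸) (n : ℕ) : ‖x ^ n‖ ≤ ‖x‖ ^ n := by
  cases n with
  | zero => simpa using h1
  | succ n => exact norm_pow_le' x n.succ_pos

lemma my_term_norm (h1 : ‖(1:𝔸)‖ ≤ 1) (x : 𝔸) (n : ℕ) :
    ‖(n.factorial : ℝ)⁻¹ • x ^ n‖ ≤ ‖x‖ ^ n / n.factorial := by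
  rw [norm_smul, norm_inv, Real.norm_natCast, div_eq_inv_mul]
  gcongr
  exact my_norm_pow_le h1 x n

lemma my_norm_exp_le (h1 : ‖(1:𝔸)‖ ≤ 1) (x : 𝔸) :
    ‖NormedSpace.exp x‖ ≤ Real.exp ‖x‖ := by
  rw [NormedSpace.exp_eq_tsum ℝ]
  refine (norm_tsum_le_tsum_norm (NormedSpace.norm_expSeries_summable' x)).trans ?_
  rw [Real.exp_eq_exp_ℝ, NormedSpace.exp_eq_tsum_div]
  exact Summable.tsum_le_tsum (fun n => my_term_norm h1 x n) (NormedSpace.norm_expSeries_summable' x)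
    (Real.summable_pow_div_factorial ‖x‖)

lemma my_norm_pow_sub_pow_le (x y : 𝔸) {M : ℝ} (hx : ‖x‖ ≤ M) (hy : ‖y‖ ≤ M) (n : ℕ) :
    ‖x ^ (n+1) - y ^ (n+1)‖ ≤ (n+1) * M ^ n * ‖x - y‖ := by
  induction n with
  | zero => simp
  | succ n ih =>
      have hM : 0 ≤ M := le_trans (norm_nonneg x) hx
      have hyp : ‖y ^ (n+1)‖ ≤ M ^ (n+1) :=
        (norm_pow_le' y n.succ_pos).trans (pow_le_pow_left₀ (norm_nonneg y) hy _)
      have key : x ^ (n+2) - y ^ (n+2) = x * (x ^ (n+1) - y ^ (n+1)) + (x - y) * y ^ (n+1) := by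
        rw [mul_sub, sub_mul, show n+2 = n+1+1 from rfl, pow_succ' x, pow_succ' y]
        abel
      rw [key]
      calc ‖x * (x ^ (n+1) - y ^ (n+1)) + (x - y) * y ^ (n+1)‖
          ≤ ‖x * (x ^ (n+1) - y ^ (n+1))‖ + ‖(x - y) * y ^ (n+1)‖ := norm_add_le _ _
        _ ≤ ‖x‖ * ‖x ^ (n+1) - y ^ (n+1)‖ + ‖x - y‖ * ‖y ^ (n+1)‖ := by
            gcongr <;> exact norm_mul_le _ _
        _ ≤ M * ((n+1) * M ^ n * ‖x - y‖) + ‖x - y‖ * M ^ (n+1) :=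
            add_le_add (mul_le_mul hx ih (norm_nonneg _) hM)
              (mul_le_mul_of_nonneg_left hyp (norm_nonneg _))
        _ ≤ (↑(n+1)+1) * M ^ (n+1) * ‖x - y‖ := by
            push_cast
            ring_nf
            nlinarith [norm_nonneg (x - y), pow_nonneg hM n, pow_nonneg hM (n+1)]

lemma my_norm_exp_sub_exp_le (x y : 𝔸) {M : ℝ} (hx : ‖x‖ ≤ M) (hy : ‖y‖ ≤ M) :
    ‖NormedSpace.exp x - NormedSpace.exp y‖ ≤ ‖x - y‖ * Real.exp M := by
  have hM : 0 ≤ M := le_trans (norm_nonneg x) hx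
  rw [NormedSpace.exp_eq_tsum ℝ]
  rw [← Summable.tsum_sub (NormedSpace.expSeries_summable' (𝕂 := ℝ) x)
    (NormedSpace.expSeries_summable' (𝕂 := ℝ) y)]
  have hterm : ∀ n : ℕ, (n.factorial : ℝ)⁻¹ • x ^ n - (n.factorial : ℝ)⁻¹ • y ^ n
      = (n.factorial : ℝ)⁻¹ • (x ^ n - y ^ n) := fun n => (smul_sub _ _ _).symm
  simp_rw [hterm]
  set a : ℕ → ℝ := fun n => ‖(n.factorial : ℝ)⁻¹ • (x ^ n - y ^ n)‖ with ha
  have hsa : Summable a := by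
    apply Summable.of_nonneg_of_le (fun n => norm_nonneg _)
      (fun n => ?_) ((NormedSpace.norm_expSeries_summable' (𝕂 := ℝ) x).add
        (NormedSpace.norm_expSeries_summable' (𝕂 := ℝ) y))
    calc ‖(n.factorial : ℝ)⁻¹ • (x ^ n - y ^ n)‖
        = ‖(n.factorial : ℝ)⁻¹ • x ^ n - (n.factorial : ℝ)⁻¹ • y ^ n‖ := by rw [smul_sub]
      _ ≤ _ := norm_sub_le _ _
  refine (norm_tsum_le_tsum_norm hsa).trans ?_
  rw [Summable.tsum_eq_zero_add hsa]
  have ha0 : a 0 = 0 := by simp [ha]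
  rw [ha0, zero_add]
  have hb : ∀ n : ℕ, a (n+1) ≤ ‖x - y‖ * (M ^ n / n.factorial) := by
    intro n
    rw [ha]
    simp only []
    rw [norm_smul, norm_inv, Real.norm_natCast]
    calc (↑(n+1).factorial)⁻¹ * ‖x ^ (n+1) - y ^ (n+1)‖
        ≤ (↑(n+1).factorial)⁻¹ * ((n+1) * M ^ n * ‖x - y‖) := by
          gcongr
          exact my_norm_pow_sub_pow_le x y hx hy n
      _ = ‖x - y‖ * (M ^ n / n.factorial) := by
          rw [Nat.factorial_succ]
          push_cast
          rw [mul_inv]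
          field_simp
  calc ∑' n, a (n+1) ≤ ∑' n : ℕ, ‖x - y‖ * (M ^ n / n.factorial) := by
        refine Summable.tsum_le_tsum hb ((summable_nat_add_iff 1).2 hsa) ?_
        exact (Real.summable_pow_div_factorial M).mul_left _
    _ = ‖x - y‖ * Real.exp M := by
        rw [tsum_mul_left, Real.exp_eq_exp_ℝ, NormedSpace.exp_eq_tsum_div]

end ExpLemmas

lemma eLpNorm_two_eq (ν : Measure ℝ) (f : ℝ → ℝ) :
    eLpNorm f 2 ν = (∫⁻ a, (‖f a‖₊ : ENNReal) ^ (2:ℝ) ∂ν) ^ ((1:ℝ)/2) := by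
  rw [eLpNorm_eq_lintegral_rpow_enorm_toReal (by norm_num) (by norm_num)]
  norm_num
  rfl

lemma eLpNorm_two_eq' (f : ℝ × ℝ → ℝ) :
    eLpNorm f 2 (μ01.prod μ01) = (∫⁻ a, (‖f a‖₊ : ENNReal) ^ (2:ℝ) ∂(μ01.prod μ01)) ^ ((1:ℝ)/2) := by
  rw [eLpNorm_eq_lintegral_rpow_enorm_toReal (by norm_num) (by norm_num)]
  norm_num
  rfl

lemma ae_sect (K : ℝ → ℝ → ℝ) (hK : MemLp (Function.uncurry K) 2 (μ01.prod μ01)) :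
    ∀ᵐ x ∂μ01, MemLp (fun y => K x y) 2 μ01 := by
  obtain ⟨mk, hmk_sm, hmk_ae⟩ := hK.1
  have h1 : ∀ᵐ x ∂μ01, (fun y => K x y) =ᵐ[μ01] fun y => mk (x, y) :=
    Measure.ae_ae_of_ae_prod hmk_ae
  have hKmk : eLpNorm (Function.uncurry K) 2 (μ01.prod μ01) = eLpNorm mk 2 (μ01.prod μ01) :=
    eLpNorm_congr_ae hmk_ae
  have hfin : (∫⁻ z, (‖mk z‖₊ : ENNReal) ^ (2:ℝ) ∂(μ01.prod μ01)) < ⊤ := by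
    have h := hK.2
    rw [hKmk, eLpNorm_two_eq'] at h
    exact (ENNReal.rpow_lt_top_iff_of_pos (by norm_num : (0:ℝ) < 1/2)).mp h
  have hmeas : Measurable fun z : ℝ × ℝ => (‖mk z‖₊ : ENNReal) ^ (2:ℝ) :=
    hmk_sm.measurable.enorm.pow_const _
  rw [lintegral_prod _ hmeas.aemeasurable] at hfin
  have h2 : ∀ᵐ x ∂μ01, (∫⁻ y, (‖mk (x, y)‖₊ : ENNReal) ^ (2:ℝ) ∂μ01) < ⊤ :=
    ae_lt_top hmeas.lintegral_prod_right' (ne_of_lt hfin)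
  filter_upwards [h1, h2] with x hx1 hx2
  refine ⟨⟨fun y => mk (x, y), hmk_sm.comp_measurable measurable_prodMk_left, hx1⟩, ?_⟩
  rw [eLpNorm_congr_ae hx1, eLpNorm_two_eq]
  exact ENNReal.rpow_lt_top_of_nonneg (by norm_num) (ne_of_lt hx2)

lemma hs_eLpNorm_bound (K : ℝ → ℝ → ℝ) (hK : MemLp (Function.uncurry K) 2 (μ01.prod μ01))
    (f : L2) :
    eLpNorm (fun x => ∫ y in I01, K x y * (f : ℝ → ℝ) y) 2 μ01 ≤
      eLpNorm (Function.uncurry K) 2 (μ01.prod μ01) * eLpNorm (f : ℝ → ℝ) 2 μ01 := by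
  classical
  obtain ⟨mk, hmk_sm, hmk_ae⟩ := hK.1
  have h1 : ∀ᵐ x ∂μ01, (fun y => K x y) =ᵐ[μ01] fun y => mk (x, y) :=
    Measure.ae_ae_of_ae_prod hmk_ae
  set B : ENNReal := ∫⁻ y, (‖(f : ℝ → ℝ) y‖₊ : ENNReal) ^ (2:ℝ) ∂μ01 with hB
  have hfmeas : AEMeasurable (fun y => (‖(f : ℝ → ℝ) y‖₊ : ENNReal)) μ01 :=
    (Lp.aestronglyMeasurable f).enorm
  set c : ℝ → ENNReal := fun x => ∫⁻ y, (‖mk (x, y)‖₊ : ENNReal) ^ (2:ℝ) ∂μ01 with hc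
  have hmeas : Measurable fun z : ℝ × ℝ => (‖mk z‖₊ : ENNReal) ^ (2:ℝ) :=
    hmk_sm.measurable.enorm.pow_const _
  have hcmeas : Measurable c := hmeas.lintegral_prod_right'
  have hconj : (2:ℝ).HolderConjugate 2 := by constructor <;> norm_num
  have hpt : ∀ᵐ x ∂μ01,
      (‖∫ y in I01, K x y * (f : ℝ → ℝ) y‖₊ : ENNReal) ^ (2:ℝ) ≤ c x * B := by
    filter_upwards [ae_sect K hK, h1] with x hx hx1
    have step1 : (‖∫ y in I01, K x y * (f : ℝ → ℝ) y‖₊ : ENNReal) ≤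
        ∫⁻ y, (‖K x y‖₊ : ENNReal) * (‖(f : ℝ → ℝ) y‖₊ : ENNReal) ∂μ01 := by
      refine (enorm_integral_le_lintegral_enorm _).trans_eq ?_
      refine lintegral_congr fun y => ?_
      rw [enorm_eq_nnnorm, nnnorm_mul]; push_cast; ring
    have step2 : (∫⁻ y, (‖K x y‖₊ : ENNReal) * (‖(f : ℝ → ℝ) y‖₊ : ENNReal) ∂μ01) ≤
        (∫⁻ y, (‖K x y‖₊ : ENNReal) ^ (2:ℝ) ∂μ01) ^ ((1:ℝ)/2) * B ^ ((1:ℝ)/2) :=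
      ENNReal.lintegral_mul_le_Lp_mul_Lq μ01 hconj hx.1.enorm hfmeas
    have hsec : (∫⁻ y, (‖K x y‖₊ : ENNReal) ^ (2:ℝ) ∂μ01) = c x := by
      refine lintegral_congr_ae ?_
      filter_upwards [hx1] with y hy
      rw [hy]
    calc (‖∫ y in I01, K x y * (f : ℝ → ℝ) y‖₊ : ENNReal) ^ (2:ℝ)
        ≤ ((c x) ^ ((1:ℝ)/2) * B ^ ((1:ℝ)/2)) ^ (2:ℝ) := by
          refine ENNReal.rpow_le_rpow ?_ (by norm_num)
          exact step1.trans (hsec ▸ step2)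
      _ = c x * B := by
          rw [ENNReal.mul_rpow_of_nonneg _ _ (by norm_num), ← ENNReal.rpow_mul,
            ← ENNReal.rpow_mul]
          norm_num
  have main : (∫⁻ x, (‖∫ y in I01, K x y * (f : ℝ → ℝ) y‖₊ : ENNReal) ^ (2:ℝ) ∂μ01) ≤
      (∫⁻ z, (‖Function.uncurry K z‖₊ : ENNReal) ^ (2:ℝ) ∂(μ01.prod μ01)) * B := by
    refine (lintegral_mono_ae hpt).trans_eq ?_
    rw [lintegral_mul_const _ hcmeas]
    congr 1
    rw [show (∫⁻ z, (‖Function.uncurry K z‖₊ : ENNReal) ^ (2:ℝ) ∂(μ01.prod μ01))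
        = ∫⁻ z, (‖mk z‖₊ : ENNReal) ^ (2:ℝ) ∂(μ01.prod μ01) from
        lintegral_congr_ae (by filter_upwards [hmk_ae] with z hz; rw [hz]),
      lintegral_prod _ hmeas.aemeasurable]
  rw [eLpNorm_two_eq, eLpNorm_two_eq', eLpNorm_two_eq, ← hB,
    ← ENNReal.mul_rpow_of_nonneg _ _ (by norm_num : (0:ℝ) ≤ 1/2)]
  exact ENNReal.rpow_le_rpow main (by norm_num)

lemma op_norm_le_of_kernel (K : ℝ → ℝ → ℝ) (hK : MemLp (Function.uncurry K) 2 (μ01.prod μ01))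
    (T : L2 →L[ℝ] L2)
    (hT : ∀ f : L2, (T f : ℝ → ℝ) =ᵐ[μ01] fun x => ∫ y in I01, K x y * f y) :
    ‖T‖ ≤ (eLpNorm (Function.uncurry K) 2 (μ01.prod μ01)).toReal := by
  refine ContinuousLinearMap.opNorm_le_bound _ ENNReal.toReal_nonneg fun f => ?_
  rw [Lp.norm_def, eLpNorm_congr_ae (hT f), Lp.norm_def, ← ENNReal.toReal_mul]
  refine ENNReal.toReal_mono ?_ (hs_eLpNorm_bound K hK f)
  exact ENNReal.mul_ne_top hK.2.ne (Lp.memLp f).2.ne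

lemma sect_integrable (K : ℝ → ℝ → ℝ) (hK : MemLp (Function.uncurry K) 2 (μ01.prod μ01))
    (f : L2) :
    ∀ᵐ x ∂μ01, Integrable (fun y => K x y * (f : ℝ → ℝ) y) μ01 := by
  filter_upwards [ae_sect K hK] with x hx
  have h := (Lp.memLp f).smul (r := 1) hx
    (hpqr := ⟨by rw [ENNReal.inv_two_add_inv_two, inv_one]⟩)
  exact memLp_one_iff_integrable.mp h

lemma rep_sub (K K' : ℝ → ℝ → ℝ)
    (hK : MemLp (Function.uncurry K) 2 (μ01.prod μ01))
    (hK' : MemLp (Function.uncurry K') 2 (μ01.prod μ01))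
    (Kop K'op : L2 →L[ℝ] L2)
    (hKop : ∀ f : L2, (Kop f : ℝ → ℝ) =ᵐ[μ01] fun x => ∫ y in I01, K x y * f y)
    (hK'op : ∀ f : L2, (K'op f : ℝ → ℝ) =ᵐ[μ01] fun x => ∫ y in I01, K' x y * f y)
    (f : L2) :
    (((K'op - Kop) f : L2) : ℝ → ℝ) =ᵐ[μ01]
      fun x => ∫ y in I01, (K' x y - K x y) * (f : ℝ → ℝ) y := by
  have h0 : (((K'op - Kop) f : L2) : ℝ → ℝ) =ᵐ[μ01]
      fun x => (K'op f : ℝ → ℝ) x - (Kop f : ℝ → ℝ) x := by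
    have h := Lp.coeFn_sub (K'op f) (Kop f)
    have e : (K'op - Kop) f = K'op f - Kop f := rfl
    rw [e]
    filter_upwards [h] with x hx
    simpa using hx
  filter_upwards [h0, hKop f, hK'op f, sect_integrable K hK f, sect_integrable K' hK' f]
    with x h0x h1x h2x i1 i2
  rw [h0x, h1x, h2x, ← integral_sub i2 i1]
  congr 1
  ext y
  ring

/-- Let `K, K' ∈ L²([0,1]²)` with `‖K‖_{L²}, ‖K'‖_{L²} ≤ β`, `β ≥ 1`, let
`𝒦, 𝒦'` be the associated integral operators on `L²[0,1]`, and let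
`g, g' ∈ L²[0,1]`.  Then for every `t ≥ 0`,
`‖e^{t(𝒦'-I)} g' - e^{t(𝒦-I)} g‖₂ ≤ ‖g' - g‖₂ (e^t + e^{2βt}) +
‖K' - K‖_{L²} ‖g‖₂ t e^{2βt}`. -/
theorem exp_laplacian_perturbation_bound
    (K K' : ℝ → ℝ → ℝ)
    (hK : MemLp (Function.uncurry K) 2 (μ01.prod μ01))
    (hK' : MemLp (Function.uncurry K') 2 (μ01.prod μ01))
    (β : ℝ) (hβ : 1 ≤ β)
    (hKnorm : eLpNorm (Function.uncurry K) 2 (μ01.prod μ01) ≤ ENNReal.ofReal β)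
    (hK'norm : eLpNorm (Function.uncurry K') 2 (μ01.prod μ01) ≤ ENNReal.ofReal β)
    (Kop K'op : L2 →L[ℝ] L2)
    (hKop : ∀ f : L2, (Kop f : ℝ → ℝ) =ᵐ[μ01]
      fun x => ∫ y in I01, K x y * f y)
    (hK'op : ∀ f : L2, (K'op f : ℝ → ℝ) =ᵐ[μ01]
      fun x => ∫ y in I01, K' x y * f y)
    (g g' : L2) (t : ℝ) (ht : 0 ≤ t) :
    ‖NormedSpace.exp (t • (K'op - 1)) g' -
        NormedSpace.exp (t • (Kop - 1)) g‖ ≤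
      ‖g' - g‖ * (Real.exp t + Real.exp (2 * β * t)) +
        (eLpNorm (fun q : ℝ × ℝ => K' q.1 q.2 - K q.1 q.2)
            2 (μ01.prod μ01)).toReal * ‖g‖ * (t * Real.exp (2 * β * t)) := by
  have h1 : ‖(1 : L2 →L[ℝ] L2)‖ ≤ 1 := by
    rw [ContinuousLinearMap.one_def]
    exact ContinuousLinearMap.norm_id_le
  set D : ℝ := (eLpNorm (fun q : ℝ × ℝ => K' q.1 q.2 - K q.1 q.2)
      2 (μ01.prod μ01)).toReal with hD
  have hD0 : 0 ≤ D := ENNReal.toReal_nonneg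
  -- operator norm bounds
  have hβ0 : (0:ℝ) ≤ β := by linarith
  have hKopβ : ‖Kop‖ ≤ β :=
    (op_norm_le_of_kernel K hK Kop hKop).trans (ENNReal.toReal_le_of_le_ofReal hβ0 hKnorm)
  have hK'opβ : ‖K'op‖ ≤ β :=
    (op_norm_le_of_kernel K' hK' K'op hK'op).trans (ENNReal.toReal_le_of_le_ofReal hβ0 hK'norm)
  have hKd : MemLp (Function.uncurry fun x y => K' x y - K x y) 2 (μ01.prod μ01) := hK'.sub hK
  have hDop : ‖K'op - Kop‖ ≤ D := by
    refine (op_norm_le_of_kernel (fun x y => K' x y - K x y) hKd (K'op - Kop) ?_)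
    exact rep_sub K K' hK hK' Kop K'op hKop hK'op
  set A := t • (K'op - 1) with hA
  set Bo := t • (Kop - 1) with hBo
  have hAn : ‖A‖ ≤ 2 * β * t := by
    rw [hA]
    refine (ContinuousLinearMap.opNorm_smul_le t _).trans ?_
    rw [Real.norm_eq_abs, abs_of_nonneg ht]
    have h2 : ‖K'op - 1‖ ≤ β + 1 := (norm_sub_le _ _).trans (by linarith)
    nlinarith
  have hBn : ‖Bo‖ ≤ 2 * β * t := by
    rw [hBo]
    refine (ContinuousLinearMap.opNorm_smul_le t _).trans ?_
    rw [Real.norm_eq_abs, abs_of_nonneg ht]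
    have h2 : ‖Kop - 1‖ ≤ β + 1 := (norm_sub_le _ _).trans (by linarith)
    nlinarith
  have hABd : ‖A - Bo‖ ≤ t * D := by
    have e : A - Bo = t • (K'op - Kop) := by
      rw [hA, hBo, ← smul_sub, sub_sub_sub_cancel_right]
    rw [e]
    refine (ContinuousLinearMap.opNorm_smul_le t _).trans ?_
    rw [Real.norm_eq_abs, abs_of_nonneg ht]
    exact mul_le_mul_of_nonneg_left hDop ht
  have split : NormedSpace.exp A g' - NormedSpace.exp Bo g
      = NormedSpace.exp A (g' - g) + (NormedSpace.exp A - NormedSpace.exp Bo) g := by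
    rw [map_sub, ContinuousLinearMap.sub_apply]
    abel
  rw [split]
  have t1 : ‖NormedSpace.exp A (g' - g)‖ ≤ Real.exp (2 * β * t) * ‖g' - g‖ := by
    refine (ContinuousLinearMap.le_opNorm _ _).trans ?_
    gcongr
    exact (my_norm_exp_le h1 A).trans (Real.exp_le_exp.mpr hAn)
  have t2 : ‖(NormedSpace.exp A - NormedSpace.exp Bo) g‖ ≤
      (t * D) * Real.exp (2 * β * t) * ‖g‖ := by
    refine (ContinuousLinearMap.le_opNorm _ _).trans ?_
    gcongr
    refine (my_norm_exp_sub_exp_le A Bo hAn hBn).trans ?_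
    exact mul_le_mul_of_nonneg_right hABd (Real.exp_pos _).le
  refine (norm_add_le _ _).trans ((add_le_add t1 t2).trans ?_)
  have he1 : 0 < Real.exp t := Real.exp_pos _
  have he2 : 0 < Real.exp (2 * β * t) := Real.exp_pos _
  have hg : 0 ≤ ‖g‖ := norm_nonneg _
  have hgg : 0 ≤ ‖g' - g‖ := norm_nonneg _
  nlinarith [mul_nonneg hgg he1.le]
end
end

section
/- Let W be a connected, almost-everywhere continuous graphon whose degree function k satisfies k(x) ≥ c for all x ∈ [0,1], where c > 0, and let g ∈ L²[0,1]. For each n ≥ 1 let W_{[n]} be the sampled step graphon, W_{[n]}(x,y) = W(i/n, j/n) for (x,y) ∈ P_i × P_j, with degree function k_{[n]}, and assume there is c' > 0 such that k_{[n]}(y) ≥ c' for all y ∈ [0,1] and all sufficiently large n. Let ℒ_{[n]}^{rw} = 𝒦_{[n]} − I where 𝒦_{[n]} has kernel W_{[n]}(x,y)/k_{[n]}(y), let g_□(x) = n ∫_{P_i} g(y) dy for x ∈ P_i, and let ℒ^{rw} = 𝒦 − I be the random-walk Laplacian of W. Then for every t ≥ 0, ‖e^{t ℒ_{[n]}^{rw}}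 g_□ − e^{t ℒ^{rw}} g‖₂ → 0 as n → ∞. -/
open MeasureTheory Set Filter

noncomputable section

/-- The `i`-th cell (`0`-based) of the uniform partition of `[0,1]` into `n`
pieces: `P_i = [i/n, (i+1)/n)` for `i < n - 1` and `P_{n-1} = [(n-1)/n, 1]`. -/
def cell (n i : ℕ) : Set ℝ :=
  if i + 1 = n then Set.Icc ((i : ℝ) / n) 1
  else Set.Ico ((i : ℝ) / n) (((i : ℝ) + 1) / n)

/-- The (`0`-based) index of the cell of the uniform partition containing
`x ∈ [0,1]`. -/
def idx (n : ℕ) (x : ℝ) : ℕ :=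
  min (n - 1) (⌊(n : ℝ) * x⌋).toNat

/-- The sampled step graphon `W_{[n]}`: on each cell `P_i × P_j` (with
`1`-based labels `i, j ∈ {1, …, n}`) it equals `W (i/n) (j/n)`. -/
def sampledGraphon (n : ℕ) (W : ℝ → ℝ → ℝ) : ℝ → ℝ → ℝ :=
  fun x y => W (((idx n x : ℝ) + 1) / n) (((idx n y : ℝ) + 1) / n)

namespace CSG

lemma idx_le (n : ℕ) (x : ℝ) : idx n x ≤ n - 1 := min_le_left _ _

lemma idx_lt (n : ℕ) (hn : 1 ≤ n) (x : ℝ) : idx n x < n :=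
  lt_of_le_of_lt (idx_le n x) (Nat.sub_lt hn one_pos)

lemma cell_subset_Icc {n i : ℕ} (hi : i < n) :
    cell n i ⊆ Set.Icc ((i : ℝ) / n) (((i : ℝ) + 1) / n) := by
  have hn : (0:ℝ) < n := by exact_mod_cast Nat.pos_of_ne_zero (by omega)
  unfold cell
  split_ifs with h
  · have : (1:ℝ) = ((i:ℝ)+1)/n := by
      rw [eq_div_iff hn.ne']; push_cast [← h]; ring
    rw [← this]
  · exact Set.Ico_subset_Icc_self

lemma cell_subset_I01 {n i : ℕ} (hi : i < n) : cell n i ⊆ I01 := by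
  have hn : (0:ℝ) < n := by exact_mod_cast Nat.pos_of_ne_zero (by omega)
  intro x hx
  have hx' := cell_subset_Icc hi hx
  constructor
  · exact le_trans (by positivity) hx'.1
  · refine le_trans hx'.2 ?_
    rw [div_le_one hn]
    exact_mod_cast Nat.succ_le_of_lt hi

lemma measurableSet_cell (n i : ℕ) : MeasurableSet (cell n i) := by
  unfold cell; split_ifs
  · exact measurableSet_Icc
  · exact measurableSet_Ico

lemma mem_cell_idx {n : ℕ} (hn : 1 ≤ n) {x : ℝ} (hx : x ∈ I01) :
    x ∈ cell n (idx n x) := by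
  have hn' : (0:ℝ) < n := by exact_mod_cast hn
  have hx0 : 0 ≤ (n:ℝ) * x := mul_nonneg (le_of_lt hn') hx.1
  have hfl0 : 0 ≤ ⌊(n:ℝ) * x⌋ := Int.floor_nonneg.2 hx0
  have htoNat : ((⌊(n:ℝ) * x⌋.toNat : ℤ) : ℝ) = ((⌊(n:ℝ) * x⌋ : ℤ) : ℝ) := by
    exact_mod_cast congrArg (fun z : ℤ => (z:ℝ)) (Int.toNat_of_nonneg hfl0)
  have hle : ((idx n x : ℕ) : ℝ) ≤ (n:ℝ) * x := by
    have h1 : (idx n x : ℕ) ≤ ⌊(n:ℝ) * x⌋.toNat := min_le_right _ _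
    have h2 : ((⌊(n:ℝ) * x⌋.toNat : ℕ) : ℝ) ≤ (n:ℝ) * x := by
      rw [show ((⌊(n:ℝ) * x⌋.toNat : ℕ) : ℝ) = ((⌊(n:ℝ) * x⌋.toNat : ℤ) : ℝ) by push_cast; ring,
        htoNat]
      exact Int.floor_le _
    exact le_trans (by exact_mod_cast h1) h2
  have hlow : ((idx n x : ℕ) : ℝ) / n ≤ x := by
    rw [div_le_iff₀ hn']
    linarith [hle, mul_comm (n:ℝ) x]
  unfold cell
  split_ifs with h
  · exact ⟨hlow, hx.2⟩
  · refine ⟨hlow, ?_⟩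
    -- here idx n x = ⌊nx⌋.toNat and it is < n - 1 + ... ; we need x < (idx+1)/n
    have hidx : idx n x = ⌊(n:ℝ) * x⌋.toNat := by
      rcases le_or_gt (n-1) (⌊(n:ℝ) * x⌋.toNat) with h1 | h1
      · exfalso
        have : idx n x = n - 1 := min_eq_left h1
        omega
      · exact min_eq_right (le_of_lt h1)
    have : (n:ℝ) * x < (idx n x : ℝ) + 1 := by
      rw [hidx, show ((⌊(n:ℝ) * x⌋.toNat : ℕ) : ℝ) = ((⌊(n:ℝ) * x⌋.toNat : ℤ) : ℝ) by push_cast; ring, htoNat]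
      exact Int.lt_floor_add_one _
    rw [lt_div_iff₀ hn']
    linarith [mul_comm (n:ℝ) x]

lemma idx_eq_of_mem {n i : ℕ} (hi : i < n) {x : ℝ} (hx : x ∈ cell n i) :
    idx n x = i := by
  have hn' : (0:ℝ) < n := by exact_mod_cast Nat.pos_of_ne_zero (by omega)
  have hx' := cell_subset_Icc hi hx
  have hge : (i:ℝ) ≤ (n:ℝ) * x := by
    have := hx'.1; rw [div_le_iff₀ hn'] at this; linarith [mul_comm x (n:ℝ)]
  have hfl_ge : (i:ℤ) ≤ ⌊(n:ℝ) * x⌋ := by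
    have := Int.le_floor.2 (by exact_mod_cast hge)
    exact_mod_cast this
  unfold cell at hx
  split_ifs at hx with h
  · -- last cell: i = n-1, x ≤ 1 so nx ≤ n, floor ≥ i = n-1
    have h1 : n - 1 ≤ ⌊(n:ℝ) * x⌋.toNat := by
      have : (i:ℤ) ≤ ⌊(n:ℝ) * x⌋.toNat := le_trans hfl_ge (Int.self_le_toNat _)
      omega
    unfold idx
    omega
  · have hlt : (n:ℝ) * x < (i:ℝ) + 1 := by
      have := hx.2; rw [lt_div_iff₀ hn'] at this; linarith [mul_comm x (n:ℝ)]
    have hfl_lt : ⌊(n:ℝ) * x⌋ < (i:ℤ) + 1 := by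
      have := Int.floor_le ((n:ℝ) * x)
      have : ((⌊(n:ℝ) * x⌋ : ℤ) : ℝ) < (i:ℝ) + 1 := lt_of_le_of_lt this hlt
      exact_mod_cast this
    have hfl : ⌊(n:ℝ) * x⌋ = (i:ℤ) := le_antisymm (by omega) hfl_ge
    unfold idx
    rw [hfl]
    simp only [Int.toNat_natCast]
    omega

lemma cell_disjoint {n : ℕ} {i j : ℕ} (hi : i < n) (hj : j < n) (hij : i ≠ j) :
    Disjoint (cell n i) (cell n j) := by
  rw [Set.disjoint_left]
  intro x hxi hxj
  exact hij ((idx_eq_of_mem hi hxi).symm.trans (idx_eq_of_mem hj hxj))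

lemma biUnion_cell {n : ℕ} (hn : 1 ≤ n) : (⋃ i ∈ Finset.range n, cell n i) = I01 := by
  apply Set.Subset.antisymm
  · refine Set.iUnion₂_subset fun i hi => cell_subset_I01 (Finset.mem_range.1 hi)
  · intro x hx
    exact Set.mem_biUnion (Finset.mem_range.2 (idx_lt n hn x)) (mem_cell_idx hn hx)

lemma volume_cell {n i : ℕ} (hn : 1 ≤ n) (hi : i < n) :
    volume (cell n i) = ENNReal.ofReal (1 / n) := by
  have hn' : (0:ℝ) < n := by exact_mod_cast hn
  unfold cell
  split_ifs with h
  · rw [Real.volume_Icc]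
    congr 1
    have : (i:ℝ) = (n:ℝ) - 1 := by
      have : ((i:ℕ):ℝ) + 1 = ((n:ℕ):ℝ) := by exact_mod_cast congrArg (fun m : ℕ => (m:ℝ)) h
      linarith
    rw [this]; field_simp; ring
  · rw [Real.volume_Ico]
    congr 1
    field_simp; ring

lemma abs_sub_le_of_mem_cell {n i : ℕ} (hi : i < n) {x y : ℝ}
    (hx : x ∈ cell n i) (hy : y ∈ cell n i) : |x - y| ≤ 1 / n := by
  have hn' : (0:ℝ) < n := by exact_mod_cast Nat.pos_of_ne_zero (by omega)
  have hx' := cell_subset_Icc hi hx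
  have hy' := cell_subset_Icc hi hy
  rw [abs_le]
  constructor
  · have : ((i:ℝ)+1)/n - (i:ℝ)/n = 1/n := by field_simp; ring
    nlinarith [hx'.1, hy'.2]
  · have : ((i:ℝ)+1)/n - (i:ℝ)/n = 1/n := by field_simp; ring
    nlinarith [hx'.2, hy'.1]

/-- the sample point -/
def sp (n : ℕ) (x : ℝ) : ℝ := ((idx n x : ℝ) + 1) / n

lemma sp_mem_I01 {n : ℕ} (hn : 1 ≤ n) (x : ℝ) : sp n x ∈ I01 := by
  have hn' : (0:ℝ) < n := by exact_mod_cast hn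
  unfold sp
  constructor
  · positivity
  · rw [div_le_one hn']
    have := idx_le n x
    have : idx n x + 1 ≤ n := by omega
    exact_mod_cast this

lemma abs_sp_sub_le {n : ℕ} (hn : 1 ≤ n) {x : ℝ} (hx : x ∈ I01) :
    |sp n x - x| ≤ 1 / n := by
  have hmem := mem_cell_idx hn hx
  have hlt := idx_lt n hn x
  have h := cell_subset_Icc hlt hmem
  have hn' : (0:ℝ) < n := by exact_mod_cast hn
  rw [abs_le]
  unfold sp
  have : ((idx n x :ℝ)+1)/n - (idx n x :ℝ)/n = 1/n := by field_simp; ring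
  constructor
  · have h2 := h.2
    have h3 : 0 < 1/(n:ℝ) := by positivity
    linarith
  · linarith [h.1]

lemma measurable_idx (n : ℕ) : Measurable (idx n) := by
  have h1 : Measurable fun x : ℝ => ⌊(n:ℝ) * x⌋ :=
    Int.measurable_floor.comp (measurable_const.mul measurable_id)
  exact (measurable_of_countable (fun z : ℤ => min (n-1) z.toNat)).comp h1

lemma measurable_sp (n : ℕ) : Measurable (sp n) :=
  (measurable_of_countable (fun i : ℕ => ((i : ℝ) + 1) / n)).comp (measurable_idx n)

lemma tendsto_sp {x : ℝ} (hx : x ∈ I01) : Tendsto (fun n => sp n x) atTop (nhds x) := by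
  have h : ∀ n : ℕ, 1 ≤ n → |sp n x - x| ≤ 1 / n := fun n hn => abs_sp_sub_le hn hx
  rw [tendsto_iff_dist_tendsto_zero]
  apply squeeze_zero_norm'
  · filter_upwards [eventually_ge_atTop 1] with n hn
    simpa [Real.dist_eq] using h n hn
  · simpa using tendsto_one_div_atTop_nhds_zero_nat (𝕜 := ℝ)


instance : IsProbabilityMeasure μ01 := by
  constructor
  rw [Measure.restrict_apply_univ, Real.volume_Icc]
  norm_num

lemma integrable_of_bdd {α : Type*} [MeasurableSpace α] {μ : Measure α} {f : α → ℝ}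
    [IsFiniteMeasure μ] (hf : AEStronglyMeasurable f μ) (C : ℝ)
    (h : ∀ᵐ x ∂μ, ‖f x‖ ≤ C) : Integrable f μ :=
  memLp_one_iff_integrable.1 (MemLp.of_bound hf C h)

lemma tendsto_sampledGraphon {W : ℝ → ℝ → ℝ} {x y : ℝ} (hx : x ∈ I01) (hy : y ∈ I01)
    (hcont : ContinuousWithinAt (Function.uncurry W) (I01 ×ˢ I01) (x, y)) :
    Tendsto (fun n => sampledGraphon n W x y) atTop (nhds (W x y)) := by
  have hq : Tendsto (fun n => (sp n x, sp n y)) atTop (nhdsWithin (x, y) (I01 ×ˢ I01)) := by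
    rw [tendsto_nhdsWithin_iff]
    constructor
    · exact (tendsto_sp hx).prodMk_nhds (tendsto_sp hy)
    · filter_upwards [eventually_ge_atTop 1] with n hn
      exact ⟨sp_mem_I01 hn x, sp_mem_I01 hn y⟩
  exact hcont.tendsto.comp hq

lemma measurable_sampled {W : ℝ → ℝ → ℝ} (hW : Measurable (Function.uncurry W)) (n : ℕ) :
    Measurable (Function.uncurry (sampledGraphon n W)) := by
  have : Function.uncurry (sampledGraphon n W)
      = Function.uncurry W ∘ (fun p : ℝ × ℝ => (sp n p.1, sp n p.2)) := rfl
  rw [this]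
  exact hW.comp (((measurable_sp n).comp measurable_fst).prodMk
    ((measurable_sp n).comp measurable_snd))

/-- degree function -/
def deg (W : ℝ → ℝ → ℝ) (y : ℝ) : ℝ := ∫ z in I01, W y z

lemma stronglyMeasurable_deg {W : ℝ → ℝ → ℝ} (hW : Measurable (Function.uncurry W)) :
    StronglyMeasurable (deg W) :=
  hW.stronglyMeasurable.integral_prod_right'

lemma tendsto_deg_sampled {W : ℝ → ℝ → ℝ} (hW : Measurable (Function.uncurry W))
    (hWrange : ∀ x ∈ I01, ∀ y ∈ I01, W x y ∈ Set.Icc (0:ℝ) 1)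
    (hWcont : ∀ᵐ q ∂(μ01.prod μ01),
      ContinuousWithinAt (Function.uncurry W) (I01 ×ˢ I01) q) :
    ∀ᵐ y ∂μ01, Tendsto (fun n => deg (sampledGraphon n W) y) atTop (nhds (deg W y)) := by
  have h1 : ∀ᵐ x ∂μ01, ∀ᵐ z ∂μ01,
      ContinuousWithinAt (Function.uncurry W) (I01 ×ˢ I01) (x, z) :=
    Measure.ae_ae_of_ae_prod hWcont
  filter_upwards [h1, ae_restrict_mem measurableSet_Icc] with y hy hyI
  show Tendsto (fun n => ∫ z, sampledGraphon n W y z ∂μ01) atTop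
    (nhds (∫ z, W y z ∂μ01))
  refine tendsto_integral_filter_of_dominated_convergence (fun _ => (1:ℝ)) ?_ ?_
    (integrable_const 1) ?_
  · filter_upwards with n
    exact ((measurable_sampled hW n).comp
      (measurable_const.prodMk measurable_id)).aestronglyMeasurable
  · filter_upwards [eventually_ge_atTop 1] with n hn
    filter_upwards [ae_restrict_mem measurableSet_Icc] with z hz
    have h := hWrange _ (sp_mem_I01 hn y) _ (sp_mem_I01 hn z)
    have he : sampledGraphon n W y z = W (sp n y) (sp n z) := rfl
    rw [he, Real.norm_eq_abs, abs_le]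
    exact ⟨by linarith [h.1], h.2⟩
  · filter_upwards [hy, ae_restrict_mem measurableSet_Icc] with z hz hzI
    exact tendsto_sampledGraphon hyI hzI hz

/-- random walk kernel -/
def Kker (W : ℝ → ℝ → ℝ) (x y : ℝ) : ℝ := W x y / deg W y

lemma measurable_Kker {W : ℝ → ℝ → ℝ} (hW : Measurable (Function.uncurry W)) :
    Measurable (fun p : ℝ × ℝ => Kker W p.1 p.2) :=
  hW.div ((stronglyMeasurable_deg hW).measurable.comp measurable_snd)

lemma ae_prod_mem : ∀ᵐ p ∂(μ01.prod μ01), p.1 ∈ I01 ∧ p.2 ∈ I01 := by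
  rw [Measure.prod_restrict]
  filter_upwards [ae_restrict_mem (measurableSet_Icc.prod measurableSet_Icc)] with p hp
  exact hp

/-- squared L² distance between sampled and true random-walk kernels -/
def Dsq (W : ℝ → ℝ → ℝ) (n : ℕ) : ℝ :=
  ∫ p, (Kker (sampledGraphon n W) p.1 p.2 - Kker W p.1 p.2)^2 ∂(μ01.prod μ01)

lemma Kker_bounds {W : ℝ → ℝ → ℝ} {c : ℝ} (hc : 0 < c)
    (hWrange : ∀ x ∈ I01, ∀ y ∈ I01, W x y ∈ Set.Icc (0:ℝ) 1)
    (hk : ∀ x ∈ I01, c ≤ deg W x) {x y : ℝ} (hx : x ∈ I01) (hy : y ∈ I01) :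
    Kker W x y ∈ Set.Icc (0:ℝ) (1/c) := by
  have h1 := hWrange x hx y hy
  have h2 := hk y hy
  constructor
  · exact div_nonneg h1.1 (by linarith)
  · exact div_le_div₀ zero_le_one h1.2 hc h2

lemma sampled_range {W : ℝ → ℝ → ℝ}
    (hWrange : ∀ x ∈ I01, ∀ y ∈ I01, W x y ∈ Set.Icc (0:ℝ) 1)
    {n : ℕ} (hn : 1 ≤ n) (x y : ℝ) : sampledGraphon n W x y ∈ Set.Icc (0:ℝ) 1 :=
  hWrange _ (sp_mem_I01 hn x) _ (sp_mem_I01 hn y)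

lemma sampled_range' {W : ℝ → ℝ → ℝ}
    (hWrange : ∀ x ∈ I01, ∀ y ∈ I01, W x y ∈ Set.Icc (0:ℝ) 1)
    {n : ℕ} (hn : 1 ≤ n) (x : ℝ) (hx : x ∈ I01) (y : ℝ) (hy : y ∈ I01) :
    sampledGraphon n W x y ∈ Set.Icc (0:ℝ) 1 :=
  sampled_range hWrange hn x y

lemma tendsto_Dsq {W : ℝ → ℝ → ℝ} (hW : Measurable (Function.uncurry W))
    (hWrange : ∀ x ∈ I01, ∀ y ∈ I01, W x y ∈ Set.Icc (0:ℝ) 1)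
    (hWcont : ∀ᵐ q ∂(μ01.prod μ01),
      ContinuousWithinAt (Function.uncurry W) (I01 ×ˢ I01) q)
    {c : ℝ} (hc : 0 < c) (hk : ∀ x ∈ I01, c ≤ deg W x)
    {c' : ℝ} (hc' : 0 < c') {N : ℕ}
    (hkn : ∀ n : ℕ, N ≤ n → ∀ y ∈ I01, c' ≤ deg (sampledGraphon n W) y) :
    Tendsto (Dsq W) atTop (nhds 0) := by
  have key : Tendsto (Dsq W) atTop (nhds (∫ _p, (0:ℝ) ∂(μ01.prod μ01))) := by
    refine tendsto_integral_filter_of_dominated_convergence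
      (fun _ => (1/c' + 1/c)^2) ?_ ?_ (integrable_const _) ?_
    · filter_upwards with n
      exact (((measurable_Kker (measurable_sampled hW n)).sub
        (measurable_Kker hW)).pow_const 2).aestronglyMeasurable
    · filter_upwards [eventually_ge_atTop (max N 1)] with n hn
      filter_upwards [ae_prod_mem] with p hp
      have h1 : Kker (sampledGraphon n W) p.1 p.2 ∈ Set.Icc (0:ℝ) (1/c') :=
        Kker_bounds hc' (sampled_range' hWrange (le_trans (le_max_right N 1) hn))
          (fun y hy => hkn n (le_trans (le_max_left N 1) hn) y hy) hp.1 hp.2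
      have h2 : Kker W p.1 p.2 ∈ Set.Icc (0:ℝ) (1/c) := Kker_bounds hc hWrange hk hp.1 hp.2
      rw [Real.norm_eq_abs, abs_of_nonneg (sq_nonneg _)]
      refine sq_le_sq' ?_ ?_
      · have hpos : 0 < 1/c' := by positivity
        linarith [h1.1, h2.2]
      · have hpos : 0 < 1/c := by positivity
        linarith [h1.2, h2.1]
    · filter_upwards [ae_prod_mem, hWcont,
        (Measure.quasiMeasurePreserving_snd).ae
          (tendsto_deg_sampled hW hWrange hWcont)] with p hp hcW hdeg
      have h1 : Tendsto (fun n => sampledGraphon n W p.1 p.2) atTop (nhds (W p.1 p.2)) :=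
        tendsto_sampledGraphon hp.1 hp.2 hcW
      have h2 : deg W p.2 ≠ 0 := by have := hk p.2 hp.2; linarith
      have h3 : Tendsto (fun n => Kker (sampledGraphon n W) p.1 p.2) atTop
          (nhds (Kker W p.1 p.2)) := h1.div hdeg h2
      have h4 := (h3.sub (tendsto_const_nhds (x := Kker W p.1 p.2))).pow 2
      simpa using h4
  simpa using key


open scoped RealInnerProductSpace in
lemma inner_toLp {α : Type*} [MeasurableSpace α] {μ : Measure α} {f g : α → ℝ}
    (hf : MemLp f 2 μ) (hg : MemLp g 2 μ) :
    ⟪hf.toLp f, hg.toLp g⟫ = ∫ x, f x * g x ∂μ := by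
  rw [L2.inner_def]
  apply integral_congr_ae
  filter_upwards [hf.coeFn_toLp, hg.coeFn_toLp] with x h1 h2
  rw [h1, h2]
  simp [RCLike.inner_apply, starRingEnd_apply, star_trivial]; ring

lemma norm_toLp_sq {α : Type*} [MeasurableSpace α] {μ : Measure α} {f : α → ℝ}
    (hf : MemLp f 2 μ) : ‖hf.toLp f‖^2 = ∫ x, f x ^ 2 ∂μ := by
  rw [← real_inner_self_eq_norm_sq, inner_toLp hf hf]
  apply integral_congr_ae
  filter_upwards with x
  ring

lemma norm_L2_sq {α : Type*} [MeasurableSpace α] {μ : Measure α} (F : Lp ℝ 2 μ) :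
    ‖F‖^2 = ∫ x, (F x) ^ 2 ∂μ := by
  have h := norm_toLp_sq (Lp.memLp F)
  rwa [Lp.toLp_coeFn F (Lp.memLp F)] at h

lemma integral_mul_sq_le {α : Type*} [MeasurableSpace α] {μ : Measure α} {f g : α → ℝ}
    (hf : MemLp f 2 μ) (hg : MemLp g 2 μ) :
    (∫ x, f x * g x ∂μ)^2 ≤ (∫ x, f x ^ 2 ∂μ) * (∫ x, g x ^ 2 ∂μ) := by
  rw [← inner_toLp hf hg, ← norm_toLp_sq hf, ← norm_toLp_sq hg]
  have h := abs_real_inner_le_norm (hf.toLp f) (hg.toLp g)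
  calc (inner ℝ (hf.toLp f) (hg.toLp g) : ℝ)^2
      = |(inner ℝ (hf.toLp f) (hg.toLp g) : ℝ)|^2 := (sq_abs _).symm
    _ ≤ (‖hf.toLp f‖ * ‖hg.toLp g‖)^2 := by
        apply sq_le_sq' <;> [linarith [abs_nonneg (inner ℝ (hf.toLp f) (hg.toLp g) : ℝ)]; skip]
        exact h
    _ = ‖hf.toLp f‖^2 * ‖hg.toLp g‖^2 := by ring


lemma op_diff_sq_le {W : ℝ → ℝ → ℝ} (hW : Measurable (Function.uncurry W))
    (hWrange : ∀ x ∈ I01, ∀ y ∈ I01, W x y ∈ Set.Icc (0:ℝ) 1)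
    {c : ℝ} (hc : 0 < c) (hk : ∀ x ∈ I01, c ≤ deg W x)
    {c' : ℝ} (hc' : 0 < c') {N : ℕ} (hN : 1 ≤ N)
    (hkn : ∀ n : ℕ, N ≤ n → ∀ y ∈ I01, c' ≤ deg (sampledGraphon n W) y)
    (Kop : L2 →L[ℝ] L2)
    (hKop : ∀ f : L2, (Kop f : ℝ → ℝ) =ᵐ[μ01]
      fun x => ∫ y in I01, (W x y / ∫ z in I01, W y z) * f y)
    (Knop : ℕ → L2 →L[ℝ] L2)
    (hKnop : ∀ n : ℕ, N ≤ n → ∀ f : L2, (Knop n f : ℝ → ℝ) =ᵐ[μ01]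
      fun x => ∫ y in I01,
        (sampledGraphon n W x y / ∫ z in I01, sampledGraphon n W y z) * f y)
    {n : ℕ} (hn : N ≤ n) (f : L2) :
    ‖Knop n f - Kop f‖^2 ≤ Dsq W n * ‖f‖^2 := by
  have hn1 : 1 ≤ n := le_trans hN hn
  set Wn := sampledGraphon n W with hWndef
  set d : ℝ → ℝ → ℝ := fun x y => Kker Wn x y - Kker W x y with hddef
  set B : ℝ := 1/c' + 1/c with hBdef
  have hB0 : 0 ≤ B := by positivity
  have hWnmeas : Measurable (Function.uncurry Wn) := measurable_sampled hW n
  have hdmeas : Measurable (fun p : ℝ × ℝ => d p.1 p.2) :=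
    (measurable_Kker hWnmeas).sub (measurable_Kker hW)
  have hfint : Integrable (f : ℝ → ℝ) μ01 := (Lp.memLp f).integrable one_le_two
  have hfsq : MemLp (f : ℝ → ℝ) 2 μ01 := Lp.memLp f
  have aeI : ∀ᵐ x ∂μ01, x ∈ I01 := ae_restrict_mem measurableSet_Icc
  have hknn : ∀ y ∈ I01, c' ≤ deg Wn y := hkn n hn
  -- pointwise kernel bounds
  have hbd1 : ∀ x ∈ I01, ∀ y ∈ I01, ‖Kker Wn x y‖ ≤ 1/c' := by
    intro x hx y hy
    have h := Kker_bounds hc' (sampled_range' hWrange hn1) hknn hx hy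
    rw [Real.norm_eq_abs, abs_le]
    exact ⟨by linarith [h.1, le_of_lt (one_div_pos.2 hc')], h.2⟩
  have hbd2 : ∀ x ∈ I01, ∀ y ∈ I01, ‖Kker W x y‖ ≤ 1/c := by
    intro x hx y hy
    have h := Kker_bounds hc hWrange hk hx hy
    rw [Real.norm_eq_abs, abs_le]
    exact ⟨by linarith [h.1, le_of_lt (one_div_pos.2 hc)], h.2⟩
  have hbdd : ∀ x ∈ I01, ∀ y ∈ I01, ‖d x y‖ ≤ B := by
    intro x hx y hy
    calc ‖d x y‖ ≤ ‖Kker Wn x y‖ + ‖Kker W x y‖ := norm_sub_le _ _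
      _ ≤ 1/c' + 1/c := add_le_add (hbd1 x hx y hy) (hbd2 x hx y hy)
  -- representation of the difference
  have h_rep : ((Knop n f - Kop f : L2) : ℝ → ℝ) =ᵐ[μ01]
      fun x => ∫ y, d x y * f y ∂μ01 := by
    filter_upwards [Lp.coeFn_sub (Knop n f) (Kop f), hKnop n hn f, hKop f, aeI]
      with x h1 h2 h3 hx
    rw [h1, Pi.sub_apply, h2, h3]
    show (∫ y, Kker Wn x y * f y ∂μ01) - (∫ y, Kker W x y * f y ∂μ01)
      = ∫ y, d x y * f y ∂μ01
    have i1 : Integrable (fun y => Kker Wn x y * f y) μ01 :=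
      hfint.bdd_mul (((measurable_Kker hWnmeas).comp
        measurable_prodMk_left).aestronglyMeasurable)
        (by filter_upwards [aeI] with y hy; exact hbd1 x hx y hy)
    have i2 : Integrable (fun y => Kker W x y * f y) μ01 :=
      hfint.bdd_mul (((measurable_Kker hW).comp
        measurable_prodMk_left).aestronglyMeasurable)
        (by filter_upwards [aeI] with y hy; exact hbd2 x hx y hy)
    rw [← integral_sub i1 i2]
    apply integral_congr_ae
    filter_upwards with y
    simp only [hddef]
    ring
  -- Cauchy-Schwarz pointwise
  have hfI : ∫ y, (f : ℝ → ℝ) y ^ 2 ∂μ01 = ‖f‖^2 := (norm_L2_sq f).symm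
  have hCS : ∀ᵐ x ∂μ01, (∫ y, d x y * f y ∂μ01)^2
      ≤ (∫ y, d x y ^ 2 ∂μ01) * ‖f‖^2 := by
    filter_upwards [aeI] with x hx
    have hdmem : MemLp (fun y => d x y) 2 μ01 :=
      MemLp.of_bound ((hdmeas.comp measurable_prodMk_left).aestronglyMeasurable) B
        (by filter_upwards [aeI] with y hy; exact hbdd x hx y hy)
    have h := integral_mul_sq_le hdmem hfsq
    rwa [hfI] at h
  set φ : ℝ → ℝ := fun x => ∫ y, d x y ^ 2 ∂μ01 with hφdef
  have hφmeas : StronglyMeasurable φ :=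
    ((hdmeas.pow_const 2).stronglyMeasurable).integral_prod_right'
  have hdsq_bd : ∀ x ∈ I01, ∀ᵐ y ∂μ01, ‖d x y ^ 2‖ ≤ B^2 := by
    intro x hx
    filter_upwards [aeI] with y hy
    rw [Real.norm_eq_abs, abs_of_nonneg (sq_nonneg _)]
    have h := hbdd x hx y hy
    rw [Real.norm_eq_abs, abs_le] at h
    exact sq_le_sq' (by linarith [h.1]) h.2
  have hdsq_int : ∀ x ∈ I01, Integrable (fun y => d x y ^ 2) μ01 := fun x hx =>
    integrable_of_bdd (((hdmeas.pow_const 2).comp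
      measurable_prodMk_left).aestronglyMeasurable) (B^2) (hdsq_bd x hx)
  have hφbd : ∀ᵐ x ∂μ01, ‖φ x‖ ≤ B^2 := by
    filter_upwards [aeI] with x hx
    have h1 : φ x ≤ ∫ _y, B^2 ∂μ01 := by
      apply integral_mono_ae (hdsq_int x hx) (integrable_const _)
      filter_upwards [hdsq_bd x hx] with y hy
      rw [Real.norm_eq_abs, abs_of_nonneg (sq_nonneg _)] at hy
      exact hy
    have h2 : 0 ≤ φ x := integral_nonneg (fun y => sq_nonneg _)
    rw [Real.norm_eq_abs, abs_of_nonneg h2]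
    simpa using h1
  have hφint : Integrable φ μ01 :=
    integrable_of_bdd hφmeas.aestronglyMeasurable (B^2) hφbd
  have lhs_int : Integrable (fun x => (∫ y, d x y * f y ∂μ01)^2) μ01 := by
    apply ((Lp.memLp (Knop n f - Kop f)).integrable_sq).congr
    filter_upwards [h_rep] with x hx
    rw [hx]
  have hDsq : ∫ x, φ x ∂μ01 = Dsq W n := by
    have hprod : Integrable (Function.uncurry fun x y => d x y ^ 2) (μ01.prod μ01) := by
      apply integrable_of_bdd ((hdmeas.pow_const 2).aestronglyMeasurable) (B^2)
      filter_upwards [ae_prod_mem] with p hp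
      rw [Real.norm_eq_abs, abs_of_nonneg (sq_nonneg _)]
      have h := hbdd p.1 hp.1 p.2 hp.2
      rw [Real.norm_eq_abs, abs_le] at h
      exact sq_le_sq' (by linarith [h.1]) h.2
    exact integral_integral hprod
  calc ‖Knop n f - Kop f‖^2
      = ∫ x, ((Knop n f - Kop f : L2) x)^2 ∂μ01 := norm_L2_sq _
    _ = ∫ x, (∫ y, d x y * f y ∂μ01)^2 ∂μ01 := by
        apply integral_congr_ae
        filter_upwards [h_rep] with x hx
        rw [hx]
    _ ≤ ∫ x, φ x * ‖f‖^2 ∂μ01 := integral_mono_ae lhs_int (hφint.mul_const _) hCS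
    _ = (∫ x, φ x ∂μ01) * ‖f‖^2 := integral_mul_const _ _
    _ = Dsq W n * ‖f‖^2 := by rw [hDsq]

lemma Dsq_nonneg (W : ℝ → ℝ → ℝ) (n : ℕ) : 0 ≤ Dsq W n :=
  integral_nonneg (fun p => sq_nonneg _)


/-- cell averaging operator -/
def avg (n : ℕ) (h : ℝ → ℝ) : ℝ → ℝ := fun x => (n:ℝ) * ∫ y in cell n (idx n x), h y

lemma measurable_avg (n : ℕ) (h : ℝ → ℝ) : Measurable (avg n h) := by
  have he : avg n h = (fun i : ℕ => (n:ℝ) * ∫ y in cell n i, h y) ∘ idx n := rfl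
  rw [he]
  exact (measurable_of_countable _).comp (measurable_idx n)

lemma integrableOn_cell {n i : ℕ} (hi : i < n) {h : ℝ → ℝ} (hint : Integrable h μ01) :
    IntegrableOn h (cell n i) volume :=
  (show IntegrableOn h I01 volume from hint).mono_set (cell_subset_I01 hi)

lemma avg_memℒp {n : ℕ} (hn : 1 ≤ n) {h : ℝ → ℝ} (hint : Integrable h μ01) :
    MemLp (avg n h) 2 μ01 := by
  apply MemLp.of_bound (measurable_avg n h).aestronglyMeasurable
    ((n:ℝ) * ∫ y, |h y| ∂μ01)
  apply ae_of_all
  intro x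
  have hi := idx_lt n hn x
  rw [Real.norm_eq_abs]
  show |(n:ℝ) * ∫ y in cell n (idx n x), h y| ≤ _
  rw [abs_mul, Nat.abs_cast]
  apply mul_le_mul_of_nonneg_left _ (Nat.cast_nonneg n)
  calc |∫ y in cell n (idx n x), h y| ≤ ∫ y in cell n (idx n x), |h y| := by
        simpa [Real.norm_eq_abs] using
          norm_integral_le_integral_norm (μ := volume.restrict (cell n (idx n x))) h
    _ ≤ ∫ y in I01, |h y| :=
        setIntegral_mono_set hint.abs (Filter.Eventually.of_forall fun y => abs_nonneg _)
          (HasSubset.Subset.eventuallyLE (cell_subset_I01 hi))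

lemma avg_contraction {n : ℕ} (hn : 1 ≤ n) {h : ℝ → ℝ} (hmem : MemLp h 2 μ01) :
    ∫ x, avg n h x ^ 2 ∂μ01 ≤ ∫ x, h x ^ 2 ∂μ01 := by
  have hn' : (0:ℝ) < n := by exact_mod_cast hn
  have hint : Integrable h μ01 := hmem.integrable one_le_two
  have hsq : Integrable (fun x => h x ^ 2) μ01 := hmem.integrable_sq
  have havgsq : Integrable (fun x => avg n h x ^ 2) μ01 :=
    (avg_memℒp hn hint).integrable_sq
  have hdecomp : ∀ F : ℝ → ℝ, Integrable F μ01 →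
      ∫ x, F x ∂μ01 = ∑ i ∈ Finset.range n, ∫ x in cell n i, F x := by
    intro F hF
    have hpw : (↑(Finset.range n) : Set ℕ).Pairwise (Function.onFun Disjoint fun i => cell n i) := by
      intro i hi j hj hij
      exact cell_disjoint (Finset.mem_range.1 hi) (Finset.mem_range.1 hj) hij
    have hh := integral_biUnion_finset (μ := volume) (Finset.range n)
      (fun i _ => measurableSet_cell n i) hpw
      (fun i hi => (show IntegrableOn F I01 volume from hF).mono_set
        (cell_subset_I01 (Finset.mem_range.1 hi)))
    rw [biUnion_cell hn] at hh
    exact hh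
  rw [hdecomp _ havgsq, hdecomp _ hsq]
  apply Finset.sum_le_sum
  intro i hi
  have hi' : i < n := Finset.mem_range.1 hi
  letI : IsFiniteMeasure (volume.restrict (cell n i)) :=
    ⟨by rw [Measure.restrict_apply_univ, volume_cell hn hi']; exact ENNReal.ofReal_lt_top⟩
  have hvol : (volume (cell n i)).toReal = 1 / n := by
    rw [volume_cell hn hi', ENNReal.toReal_ofReal (by positivity)]
  set cI : ℝ := ∫ y in cell n i, h y with hcI
  have hconst : ∫ x in cell n i, avg n h x ^ 2 = ∫ _x in cell n i, ((n:ℝ) * cI)^2 := by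
    apply setIntegral_congr_fun (measurableSet_cell n i)
    intro x hx
    show avg n h x ^ 2 = _
    have : avg n h x = (n:ℝ) * cI := by
      show (n:ℝ) * ∫ y in cell n (idx n x), h y = _
      rw [idx_eq_of_mem hi' hx]
    rw [this]
  rw [hconst, setIntegral_const, measureReal_def, hvol]
  have hCS : cI^2 ≤ (∫ y in cell n i, h y ^ 2) * (1/n) := by
    have hmem' : MemLp h 2 (volume.restrict (cell n i)) :=
      hmem.mono_measure (Measure.restrict_mono (cell_subset_I01 hi') le_rfl)
    have hone : MemLp (fun _ : ℝ => (1:ℝ)) 2 (volume.restrict (cell n i)) :=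
      memLp_const 1
    have h := integral_mul_sq_le hmem' hone
    simp only [mul_one, one_pow] at h
    have h1 : ∫ _y in cell n i, (1:ℝ) = 1/n := by
      rw [setIntegral_const, measureReal_def, hvol]; simp
    rw [h1] at h
    exact h
  have hsqnn : 0 ≤ ∫ y in cell n i, h y ^ 2 :=
    setIntegral_nonneg (measurableSet_cell n i) (fun y _ => sq_nonneg _)
  calc (1/(n:ℝ)) • ((n:ℝ) * cI)^2 = (n:ℝ) * cI^2 := by
        field_simp
        rw [smul_eq_mul]; field_simp
    _ ≤ (n:ℝ) * ((∫ y in cell n i, h y ^ 2) * (1/n)) :=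
        mul_le_mul_of_nonneg_left hCS (le_of_lt hn')
    _ = ∫ y in cell n i, h y ^ 2 := by field_simp

lemma avg_cont_approx {φ : ℝ → ℝ} (hφ : Continuous φ) {ε : ℝ} (hε : 0 < ε) :
    ∀ᶠ n : ℕ in atTop, ∀ x ∈ I01, |avg n φ x - φ x| ≤ ε := by
  have huc : UniformContinuousOn φ I01 :=
    (isCompact_Icc).uniformContinuousOn_of_continuous (hφ.continuousOn)
  rw [Metric.uniformContinuousOn_iff] at huc
  obtain ⟨δ, hδ, hδ'⟩ := huc ε hε
  filter_upwards [eventually_ge_atTop 1,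
    (tendsto_one_div_atTop_nhds_zero_nat).eventually (gt_mem_nhds hδ)] with n hn1 hnδ
  intro x hx
  have hn' : (0:ℝ) < n := by exact_mod_cast hn1
  have hi : idx n x < n := idx_lt n hn1 x
  have hxc : x ∈ cell n (idx n x) := mem_cell_idx hn1 hx
  have hintφ : IntegrableOn φ (cell n (idx n x)) volume := by
    apply IntegrableOn.mono_set _ (cell_subset_Icc hi)
    exact hφ.integrableOn_Icc
  have hvol : (volume (cell n (idx n x))).toReal = 1 / n := by
    rw [volume_cell hn1 hi, ENNReal.toReal_ofReal (by positivity)]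
  have hkey : avg n φ x - φ x = (n:ℝ) * ∫ y in cell n (idx n x), (φ y - φ x) := by
    rw [integral_sub hintφ (integrableOn_const ?_)]
    · rw [setIntegral_const, measureReal_def, hvol]
      show (n:ℝ) * _ - _ = _
      field_simp
      rw [smul_eq_mul]; field_simp
    · rw [volume_cell hn1 hi]; exact ENNReal.ofReal_ne_top
  rw [hkey, abs_mul, Nat.abs_cast]
  have hb : ∀ y ∈ cell n (idx n x), ‖φ y - φ x‖ ≤ ε := by
    intro y hy
    have hyI : y ∈ I01 := cell_subset_I01 hi hy
    have hdist : dist y x < δ := by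
      rw [Real.dist_eq]
      exact lt_of_le_of_lt (abs_sub_le_of_mem_cell hi hy hxc) hnδ
    have := hδ' y hyI x hx hdist
    rw [Real.norm_eq_abs, ← Real.dist_eq]
    exact le_of_lt this
  have := norm_setIntegral_le_of_norm_le_const (by rw [volume_cell hn1 hi]; exact ENNReal.ofReal_lt_top) hb
  rw [Real.norm_eq_abs] at this
  calc (n:ℝ) * |∫ y in cell n (idx n x), (φ y - φ x)|
      ≤ (n:ℝ) * (ε * (volume (cell n (idx n x))).toReal) :=
        mul_le_mul_of_nonneg_left this (le_of_lt hn')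
    _ = ε := by rw [hvol]; field_simp


lemma tendsto_gsq (g : L2) (gsq : ℕ → L2)
    (hgsq : ∀ n : ℕ, 1 ≤ n → (gsq n : ℝ → ℝ) =ᵐ[μ01] avg n (g : ℝ → ℝ)) :
    Tendsto (fun n => ‖gsq n - g‖) atTop (nhds 0) := by
  have key : ∀ ε : ℝ, 0 < ε → ∀ᶠ n : ℕ in atTop, ‖gsq n - g‖ ≤ ε := by
    intro ε hε
    have hε3 : 0 < ε/3 := by linarith
    obtain ⟨φ, hφ, hφmem⟩ := (Lp.memLp g).exists_boundedContinuous_eLpNorm_sub_le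
      (by norm_num : (2:ENNReal) ≠ ⊤)
      (show ENNReal.ofReal (ε/3) ≠ 0 by
        simp only [ne_eq, ENNReal.ofReal_eq_zero, not_le]; linarith)
    set u : ℝ → ℝ := fun y => (g : ℝ → ℝ) y - φ y with hudef
    have hu : MemLp u 2 μ01 := (Lp.memLp g).sub hφmem
    have hu_norm : ‖hu.toLp u‖ ≤ ε/3 := by
      rw [Lp.norm_toLp]
      have h2 : eLpNorm u 2 μ01 ≤ ENNReal.ofReal (ε/3) := hφ
      calc (eLpNorm u 2 μ01).toReal ≤ (ENNReal.ofReal (ε/3)).toReal :=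
            ENNReal.toReal_mono ENNReal.ofReal_ne_top h2
        _ = ε/3 := ENNReal.toReal_ofReal (le_of_lt hε3)
    have huint : Integrable u μ01 := hu.integrable one_le_two
    have hφint : Integrable (⇑φ) μ01 := hφmem.integrable one_le_two
    have hgint : Integrable ((g : ℝ → ℝ)) μ01 := (Lp.memLp g).integrable one_le_two
    filter_upwards [eventually_ge_atTop 1, avg_cont_approx φ.continuous hε3]
      with n hn1 happrox
    have hv1 : MemLp (avg n u) 2 μ01 := avg_memℒp hn1 huint
    have hφavg : MemLp (avg n ⇑φ) 2 μ01 := avg_memℒp hn1 hφint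
    have hv2 : MemLp (fun x => avg n ⇑φ x - φ x) 2 μ01 := hφavg.sub hφmem
    have havgu : ∀ x : ℝ, avg n u x = avg n ((g : ℝ → ℝ)) x - avg n ⇑φ x := by
      intro x
      have hi := idx_lt n hn1 x
      have hsub : ∫ y in cell n (idx n x), u y
          = (∫ y in cell n (idx n x), (g : ℝ → ℝ) y) - ∫ y in cell n (idx n x), φ y :=
        integral_sub (integrableOn_cell hi hgint) (integrableOn_cell hi hφint)
      unfold avg
      rw [hsub]
      ring
    have hdec : gsq n - g = hv1.toLp (avg n u)
        + hv2.toLp (fun x => avg n ⇑φ x - φ x) - hu.toLp u := by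
      apply Lp.ext
      filter_upwards [hgsq n hn1, Lp.coeFn_sub (gsq n) g,
        Lp.coeFn_sub (hv1.toLp (avg n u) + hv2.toLp (fun x => avg n ⇑φ x - φ x)) (hu.toLp u),
        Lp.coeFn_add (hv1.toLp (avg n u)) (hv2.toLp (fun x => avg n ⇑φ x - φ x)),
        hv1.coeFn_toLp, hv2.coeFn_toLp, hu.coeFn_toLp] with x h1 h2 h3 h4 h5 h6 h7
      rw [h2, h3, Pi.sub_apply, Pi.sub_apply, h4, Pi.add_apply, h5, h6, h7, h1, havgu x]
      simp only [hudef]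
      ring
    have h1 : ‖hv1.toLp (avg n u)‖ ≤ ε/3 := by
      have hsq : ‖hv1.toLp (avg n u)‖^2 ≤ ‖hu.toLp u‖^2 := by
        rw [norm_toLp_sq hv1, norm_toLp_sq hu]
        exact avg_contraction hn1 hu
      calc ‖hv1.toLp (avg n u)‖ = Real.sqrt (‖hv1.toLp (avg n u)‖^2) :=
            (Real.sqrt_sq (norm_nonneg _)).symm
        _ ≤ Real.sqrt (‖hu.toLp u‖^2) := Real.sqrt_le_sqrt hsq
        _ = ‖hu.toLp u‖ := Real.sqrt_sq (norm_nonneg _)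
        _ ≤ ε/3 := hu_norm
    have h2 : ‖hv2.toLp (fun x => avg n ⇑φ x - φ x)‖ ≤ ε/3 := by
      have hsq : ‖hv2.toLp (fun x => avg n ⇑φ x - φ x)‖^2 ≤ (ε/3)^2 := by
        rw [norm_toLp_sq hv2]
        calc ∫ x, (avg n ⇑φ x - φ x)^2 ∂μ01 ≤ ∫ _x, (ε/3)^2 ∂μ01 := by
              apply integral_mono_ae hv2.integrable_sq (integrable_const _)
              filter_upwards [ae_restrict_mem measurableSet_Icc] with x hx
              obtain ⟨hl, hr⟩ := abs_le.1 (happrox x hx)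
              exact sq_le_sq' hl hr
          _ = (ε/3)^2 := by simp
      calc ‖hv2.toLp (fun x => avg n ⇑φ x - φ x)‖
          = Real.sqrt (‖hv2.toLp (fun x => avg n ⇑φ x - φ x)‖^2) :=
            (Real.sqrt_sq (norm_nonneg _)).symm
        _ ≤ Real.sqrt ((ε/3)^2) := Real.sqrt_le_sqrt hsq
        _ = ε/3 := Real.sqrt_sq (le_of_lt hε3)
    calc ‖gsq n - g‖
        = ‖hv1.toLp (avg n u) + hv2.toLp (fun x => avg n ⇑φ x - φ x) - hu.toLp u‖ := by
          rw [hdec]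
      _ ≤ ‖hv1.toLp (avg n u) + hv2.toLp (fun x => avg n ⇑φ x - φ x)‖ + ‖hu.toLp u‖ :=
          norm_sub_le _ _
      _ ≤ ‖hv1.toLp (avg n u)‖ + ‖hv2.toLp (fun x => avg n ⇑φ x - φ x)‖ + ‖hu.toLp u‖ :=
          add_le_add_left (norm_add_le _ _) _
      _ ≤ ε/3 + ε/3 + ε/3 := add_le_add (add_le_add h1 h2) hu_norm
      _ = ε := by ring
  rw [Metric.tendsto_atTop]
  intro ε hε
  obtain ⟨M, hM⟩ := eventually_atTop.1 (key (ε/2) (by linarith))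
  refine ⟨M, fun n hn => ?_⟩
  have := hM n hn
  rw [Real.dist_eq, sub_zero, abs_of_nonneg (norm_nonneg _)]
  linarith

end CSG

set_option maxHeartbeats 1600000 in
set_option synthInstance.maxHeartbeats 1000000 in
/-- Convergence on the sampled graph `W_{[n]}`.  Let `W` be a connected,
almost everywhere continuous graphon with degree function `k ≥ c > 0`, let
`ℒ = 𝒦 - I` be its random-walk Laplacian, and for each `n` let
`ℒ_{[n]} = 𝒦_{[n]} - I` be the random-walk Laplacian of the sampled step
graphon `W_{[n]}` (whose degree function is assumed bounded below by `c' > 0`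
for all sufficiently large `n`), with initial condition `g_□` the cell average
of `g ∈ L²[0,1]`.  Then for every `t ≥ 0`, `e^{tℒ_{[n]}} g_□ → e^{tℒ} g` in
`L²[0,1]` as `n → ∞`. -/
theorem convergence_sampled_graph
    (W : ℝ → ℝ → ℝ)
    (hWmeas : Measurable (Function.uncurry W))
    (hWsymm : ∀ x ∈ I01, ∀ y ∈ I01, W x y = W y x)
    (hWrange : ∀ x ∈ I01, ∀ y ∈ I01, W x y ∈ Set.Icc (0 : ℝ) 1)
    (hWconn : ∀ S : Set ℝ, MeasurableSet S → S ⊆ I01 →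
      0 < volume S → volume S < 1 →
      0 < ∫ x in S, ∫ y in I01 \ S, W x y)
    (hWcont : ∀ᵐ q ∂(μ01.prod μ01),
      ContinuousWithinAt (Function.uncurry W) (I01 ×ˢ I01) q)
    (c : ℝ) (hc : 0 < c)
    (hk : ∀ x ∈ I01, c ≤ ∫ y in I01, W x y)
    (c' : ℝ) (hc' : 0 < c') (N : ℕ) (hN : 1 ≤ N)
    (hkn : ∀ n : ℕ, N ≤ n → ∀ y ∈ I01, c' ≤ ∫ z in I01, sampledGraphon n W y z)
    (Kop : L2 →L[ℝ] L2)
    (hKop : ∀ f : L2, (Kop f : ℝ → ℝ) =ᵐ[μ01]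
      fun x => ∫ y in I01, (W x y / ∫ z in I01, W y z) * f y)
    (Knop : ℕ → L2 →L[ℝ] L2)
    (hKnop : ∀ n : ℕ, N ≤ n → ∀ f : L2, (Knop n f : ℝ → ℝ) =ᵐ[μ01]
      fun x => ∫ y in I01,
        (sampledGraphon n W x y / ∫ z in I01, sampledGraphon n W y z) * f y)
    (g : L2)
    (gsq : ℕ → L2)
    (hgsq : ∀ n : ℕ, 1 ≤ n → (gsq n : ℝ → ℝ) =ᵐ[μ01]
      fun x => (n : ℝ) * ∫ y in cell n (idx n x), g y)
    (t : ℝ) (ht : 0 ≤ t) :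
    Tendsto (fun n : ℕ =>
        ‖NormedSpace.exp (t • (Knop n - 1)) (gsq n) -
          NormedSpace.exp (t • (Kop - 1)) g‖)
      atTop (nhds 0) := by
  have hkdeg : ∀ x ∈ I01, c ≤ CSG.deg W x := hk
  have hkndeg : ∀ n : ℕ, N ≤ n → ∀ y ∈ I01, c' ≤ CSG.deg (sampledGraphon n W) y := hkn
  have hDsq := CSG.tendsto_Dsq hWmeas hWrange hWcont hc hkdeg hc' hkndeg
  have hopbd : ∀ᶠ n in atTop, ‖Knop n - Kop‖ ≤ Real.sqrt (CSG.Dsq W n) := by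
    filter_upwards [eventually_ge_atTop N] with n hn
    apply ContinuousLinearMap.opNorm_le_bound _ (Real.sqrt_nonneg _)
    intro f
    rw [ContinuousLinearMap.sub_apply]
    have h := CSG.op_diff_sq_le hWmeas hWrange hc hkdeg hc' hN hkndeg Kop hKop Knop hKnop hn f
    have h0 : 0 ≤ CSG.Dsq W n := CSG.Dsq_nonneg W n
    calc ‖Knop n f - Kop f‖ = Real.sqrt (‖Knop n f - Kop f‖^2) :=
          (Real.sqrt_sq (norm_nonneg _)).symm
      _ ≤ Real.sqrt (CSG.Dsq W n * ‖f‖^2) := Real.sqrt_le_sqrt h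
      _ = Real.sqrt (CSG.Dsq W n) * ‖f‖ := by
          rw [Real.sqrt_mul h0, Real.sqrt_sq (norm_nonneg _)]
  have hsqrt : Tendsto (fun n => Real.sqrt (CSG.Dsq W n)) atTop (nhds 0) := by
    have h := (Real.continuous_sqrt.tendsto 0).comp hDsq
    simpa [Function.comp_def] using h
  have hopnorm : Tendsto (fun n => ‖Knop n - Kop‖) atTop (nhds 0) :=
    squeeze_zero' (Filter.Eventually.of_forall fun n => norm_nonneg _) hopbd hsqrt
  have hKtend : Tendsto Knop atTop (nhds Kop) :=
    tendsto_iff_norm_sub_tendsto_zero.2 hopnorm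
  have hAtend : Tendsto (fun n => t • (Knop n - 1)) atTop (nhds (t • (Kop - 1))) :=
    (hKtend.sub tendsto_const_nhds).const_smul t
  have hexp : Tendsto (fun n => NormedSpace.exp (t • (Knop n - 1))) atTop
      (nhds (NormedSpace.exp (t • (Kop - 1)))) :=
    letI : NormedAlgebra ℚ (L2 →L[ℝ] L2) := NormedAlgebra.restrictScalars ℚ ℝ _
    (NormedSpace.exp_continuous.tendsto _).comp hAtend
  have hexpdiff : Tendsto (fun n => ‖NormedSpace.exp (t • (Knop n - 1)) -
      NormedSpace.exp (t • (Kop - 1))‖) atTop (nhds 0) :=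
    tendsto_iff_norm_sub_tendsto_zero.1 hexp
  have hexpnorm : Tendsto (fun n => ‖NormedSpace.exp (t • (Knop n - 1))‖) atTop
      (nhds ‖NormedSpace.exp (t • (Kop - 1))‖) :=
    (continuous_norm.tendsto _).comp hexp
  have hgnorm : Tendsto (fun n => ‖gsq n - g‖) atTop (nhds 0) :=
    CSG.tendsto_gsq g gsq hgsq
  have hbound : ∀ n : ℕ, ‖NormedSpace.exp (t • (Knop n - 1)) (gsq n) -
        NormedSpace.exp (t • (Kop - 1)) g‖
      ≤ ‖NormedSpace.exp (t • (Knop n - 1))‖ * ‖gsq n - g‖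
        + ‖NormedSpace.exp (t • (Knop n - 1)) - NormedSpace.exp (t • (Kop - 1))‖ * ‖g‖ := by
    intro n
    have hsplit : NormedSpace.exp (t • (Knop n - 1)) (gsq n) -
          NormedSpace.exp (t • (Kop - 1)) g
        = NormedSpace.exp (t • (Knop n - 1)) (gsq n - g)
          + (NormedSpace.exp (t • (Knop n - 1)) - NormedSpace.exp (t • (Kop - 1))) g := by
      rw [map_sub, ContinuousLinearMap.sub_apply]
      abel
    rw [hsplit]
    exact le_trans (norm_add_le _ _)
      (add_le_add (ContinuousLinearMap.le_opNorm _ _) (ContinuousLinearMap.le_opNorm _ _))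
  have hlim : Tendsto (fun n => ‖NormedSpace.exp (t • (Knop n - 1))‖ * ‖gsq n - g‖
      + ‖NormedSpace.exp (t • (Knop n - 1)) - NormedSpace.exp (t • (Kop - 1))‖ * ‖g‖)
      atTop (nhds 0) := by
    have h := (hexpnorm.mul hgnorm).add (hexpdiff.mul (tendsto_const_nhds (x := ‖g‖)))
    simpa using h
  exact squeeze_zero (fun n => norm_nonneg _) hbound hlim
end
end

section
/- Let W be a connected graphon whose degree function k satisfies k(x) ≥ c for all x ∈ [0,1], where c > 0, and let g ∈ L²[0,1]. Let (W_n) be a sequence of graphons with ‖W_n − W‖_{L²([0,1]²)} → 0, whose degree functions k_n satisfy k_n(y) ≥ c' for all y ∈ [0,1] and all sufficiently large n, for some c' > 0. Let ℒ_n^{rw} = 𝒦_n − I where 𝒦_n has kernel W_n(x,y)/k_n(y), let ℒ^{rw} = 𝒦 − I be the random-walk Laplacian of W, and let (g_n) ⊂ L²[0,1] satisfy ‖g_n − g‖₂ → 0. Then for every t ≥ 0, ‖e^{t ℒ_n^{rw}} g_n − e^{t ℒ^{rw}} g‖₂ → 0 as n → ∞. -/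
open MeasureTheory Set Filter

noncomputable section

instance : IsProbabilityMeasure μ01 := ⟨by simp [Real.volume_Icc]⟩

lemma ae_mem01 : ∀ᵐ x ∂μ01, x ∈ I01 := ae_restrict_mem measurableSet_Icc

lemma ae_mem01_prod : ∀ᵐ q : ℝ × ℝ ∂(μ01.prod μ01), q.1 ∈ I01 ∧ q.2 ∈ I01 := by
  rw [Measure.prod_restrict]
  filter_upwards [ae_restrict_mem (measurableSet_Icc.prod measurableSet_Icc)] with q hq
  exact hq

lemma sq_integral_mul_le {α : Type*} {m : MeasurableSpace α} {μ : Measure α}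
    {u v : α → ℝ} (hu : MemLp u 2 μ) (hv : MemLp v 2 μ) :
    (∫ a, u a * v a ∂μ) ^ 2 ≤ (∫ a, u a ^ 2 ∂μ) * (∫ a, v a ^ 2 ∂μ) := by
  have hpq : (2 : ℝ).HolderConjugate 2 :=
    (Real.holderConjugate_iff_eq_conjExponent one_lt_two).mpr (by norm_num)
  have h2 : ENNReal.ofReal (2 : ℝ) = 2 := by norm_num
  have hcs := integral_mul_le_Lp_mul_Lq_of_nonneg (μ := μ) hpq
    (f := fun a => ‖u a‖) (g := fun a => ‖v a‖)
    (Eventually.of_forall fun a => norm_nonneg _)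
    (Eventually.of_forall fun a => norm_nonneg _)
    (h2 ▸ hu.norm) (h2 ▸ hv.norm)
  simp only [Real.rpow_two, Real.norm_eq_abs, sq_abs] at hcs
  have habs : |∫ a, u a * v a ∂μ| ≤ ∫ a, |u a| * |v a| ∂μ := by
    calc |∫ a, u a * v a ∂μ| = ‖∫ a, u a * v a ∂μ‖ := (Real.norm_eq_abs _).symm
    _ ≤ ∫ a, ‖u a * v a‖ ∂μ := norm_integral_le_integral_norm _
    _ = ∫ a, |u a| * |v a| ∂μ := by simp [Real.norm_eq_abs, abs_mul]
  have hA : (0:ℝ) ≤ ∫ a, u a ^ 2 ∂μ := integral_nonneg fun a => sq_nonneg _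
  have hB : (0:ℝ) ≤ ∫ a, v a ^ 2 ∂μ := integral_nonneg fun a => sq_nonneg _
  have hfin : |∫ a, u a * v a ∂μ| ≤
      (∫ a, u a ^ 2 ∂μ) ^ ((1:ℝ)/2) * (∫ a, v a ^ 2 ∂μ) ^ ((1:ℝ)/2) :=
    habs.trans (by simpa [Real.norm_eq_abs, abs_mul] using hcs)
  have h := pow_le_pow_left₀ (abs_nonneg _) hfin 2
  rw [sq_abs] at h
  refine h.trans_eq ?_
  rw [mul_pow, ← Real.rpow_natCast ((∫ a, u a ^ 2 ∂μ) ^ ((1:ℝ)/2)) 2,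
    ← Real.rpow_natCast ((∫ a, v a ^ 2 ∂μ) ^ ((1:ℝ)/2)) 2,
    ← Real.rpow_mul hA, ← Real.rpow_mul hB]
  norm_num



lemma L2_norm_sq (h : L2) : ‖h‖ ^ 2 = ∫ a, (h : ℝ → ℝ) a ^ 2 ∂μ01 := by
  rw [← real_inner_self_eq_norm_sq, MeasureTheory.L2.inner_def]
  refine integral_congr_ae (Eventually.of_forall fun a => ?_)
  simp [RCLike.inner_apply, sq]


lemma opNorm_le_of_kernel (D : ℝ → ℝ → ℝ) (hD : Measurable (Function.uncurry D))
    (hDsq : Integrable (fun q : ℝ × ℝ => D q.1 q.2 ^ 2) (μ01.prod μ01))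
    (T : L2 →L[ℝ] L2)
    (hT : ∀ f : L2, (T f : ℝ → ℝ) =ᵐ[μ01] fun x => ∫ y, D x y * f y ∂μ01)
    (M : ℝ) (hM : 0 ≤ M)
    (hMb : ∫ q, D q.1 q.2 ^ 2 ∂(μ01.prod μ01) ≤ M ^ 2) :
    ‖T‖ ≤ M := by
  refine T.opNorm_le_bound hM fun f => ?_
  set F : ℝ → ℝ := (f : ℝ → ℝ) with hF
  have hfmem : MemLp F 2 μ01 := Lp.memLp f
  have hf2 : Integrable (fun a => F a ^ 2) μ01 :=
    (memLp_two_iff_integrable_sq hfmem.aestronglyMeasurable).mp hfmem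
  set intf : ℝ := ∫ a, F a ^ 2 ∂μ01 with hintf
  have hintf0 : 0 ≤ intf := integral_nonneg fun a => sq_nonneg _
  -- sections of D are in L2 a.e.
  have hsec : ∀ᵐ x ∂μ01, Integrable (fun y => D x y ^ 2) μ01 := by
    have := hDsq.prod_right_ae
    filter_upwards [this] with x hx using hx
  have hptwise : ∀ᵐ x ∂μ01,
      (∫ y, D x y * F y ∂μ01) ^ 2 ≤ (∫ y, D x y ^ 2 ∂μ01) * intf := by
    filter_upwards [hsec] with x hx
    have hu : MemLp (fun y => D x y) 2 μ01 :=
      (memLp_two_iff_integrable_sq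
        (hD.of_uncurry_left.aestronglyMeasurable)).mpr hx
    exact sq_integral_mul_le hu hfmem
  have hTf2 : Integrable (fun a => ((T f : ℝ → ℝ) a) ^ 2) μ01 :=
    (memLp_two_iff_integrable_sq (Lp.memLp (T f)).aestronglyMeasurable).mp (Lp.memLp (T f))
  have hint1 : Integrable (fun x => (∫ y, D x y * F y ∂μ01) ^ 2) μ01 :=
    hTf2.congr ((hT f).mono fun a ha => by simp only [ha]; rfl)
  have hDint : Integrable (fun x => ∫ y, D x y ^ 2 ∂μ01) μ01 := hDsq.integral_prod_left
  have key : ‖T f‖ ^ 2 ≤ (M * ‖f‖) ^ 2 := by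
    calc ‖T f‖ ^ 2 = ∫ a, ((T f : ℝ → ℝ) a) ^ 2 ∂μ01 := L2_norm_sq _
      _ = ∫ a, (∫ y, D a y * F y ∂μ01) ^ 2 ∂μ01 :=
          integral_congr_ae ((hT f).mono fun a ha => by simp only [ha]; rfl)
      _ ≤ ∫ x, (∫ y, D x y ^ 2 ∂μ01) * intf ∂μ01 :=
          integral_mono_ae hint1 (hDint.mul_const intf) hptwise
      _ = (∫ x, ∫ y, D x y ^ 2 ∂μ01 ∂μ01) * intf := integral_mul_const _ _
      _ = (∫ q, D q.1 q.2 ^ 2 ∂(μ01.prod μ01)) * intf := by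
          rw [MeasureTheory.integral_integral hDsq]
      _ ≤ M ^ 2 * intf := mul_le_mul_of_nonneg_right hMb hintf0
      _ = (M * ‖f‖) ^ 2 := by rw [mul_pow, L2_norm_sq f]
  have h := Real.sqrt_le_sqrt key
  rwa [Real.sqrt_sq (norm_nonneg _), Real.sqrt_sq (mul_nonneg hM (norm_nonneg _))] at h



/-- The key quantitative estimate. -/
lemma kernel_diff_opNorm_le
    (W W' : ℝ → ℝ → ℝ)
    (hWm : Measurable (Function.uncurry W)) (hW'm : Measurable (Function.uncurry W'))
    (hWr : ∀ x ∈ I01, ∀ y ∈ I01, W x y ∈ Set.Icc (0:ℝ) 1)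
    (hW'r : ∀ x ∈ I01, ∀ y ∈ I01, W' x y ∈ Set.Icc (0:ℝ) 1)
    (c c' : ℝ) (hc : 0 < c) (hc' : 0 < c')
    (hk : ∀ y ∈ I01, c ≤ ∫ z in I01, W y z)
    (hk' : ∀ y ∈ I01, c' ≤ ∫ z in I01, W' y z)
    (T : L2 →L[ℝ] L2)
    (hT : ∀ f : L2, (T f : ℝ → ℝ) =ᵐ[μ01] fun x =>
      (∫ y in I01, (W' x y / ∫ z in I01, W' y z) * f y)
        - ∫ y in I01, (W x y / ∫ z in I01, W y z) * f y) :
    ‖T‖ ≤ Real.sqrt ((2/c'^2 + 2/(c*c')^2) *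
        ∫ q : ℝ × ℝ, (W' q.1 q.2 - W q.1 q.2)^2 ∂(μ01.prod μ01)) := by
  -- degree functions
  set k : ℝ → ℝ := fun y => ∫ z in I01, W y z
  set k' : ℝ → ℝ := fun y => ∫ z in I01, W' y z
  have hkm : Measurable k := (hWm.stronglyMeasurable.integral_prod_right).measurable
  have hk'm : Measurable k' := (hW'm.stronglyMeasurable.integral_prod_right).measurable
  -- the kernel difference
  set D : ℝ → ℝ → ℝ := fun x y => W' x y / k' y - W x y / k y
  have hDm : Measurable (Function.uncurry D) := by
    exact ((hW'm.div (hk'm.comp measurable_snd)).sub (hWm.div (hkm.comp measurable_snd)))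
  -- the difference of graphons
  set Δ : ℝ → ℝ → ℝ := fun x y => W' x y - W x y
  have hΔm : Measurable (Function.uncurry Δ) := hW'm.sub hWm
  have hΔsq : Integrable (fun q : ℝ × ℝ => Δ q.1 q.2 ^ 2) (μ01.prod μ01) := by
    refine (integrable_const (1:ℝ)).mono'
      ((hΔm.pow_const 2).aestronglyMeasurable) ?_
    filter_upwards [ae_mem01_prod] with q ⟨h1, h2⟩
    have hr := hWr q.1 h1 q.2 h2
    have hr' := hW'r q.1 h1 q.2 h2
    have habs : |Δ q.1 q.2| ≤ 1 := by
      show |W' q.1 q.2 - W q.1 q.2| ≤ 1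
      rw [abs_le]
      exact ⟨by linarith [hr.2, hr'.1], by linarith [hr.1, hr'.2]⟩
    calc ‖Δ q.1 q.2 ^ 2‖ = |Δ q.1 q.2| ^ 2 := by rw [Real.norm_eq_abs, abs_pow]
      _ ≤ 1 ^ 2 := pow_le_pow_left₀ (abs_nonneg _) habs 2
      _ = 1 := one_pow 2
  set E : ℝ := ∫ q : ℝ × ℝ, Δ q.1 q.2 ^ 2 ∂(μ01.prod μ01)
  have hE0 : 0 ≤ E := integral_nonneg fun q => sq_nonneg _
  -- the "row-sum of |Δ|" function
  have hΔam : Measurable (Function.uncurry fun y z => |Δ y z|) := by exact hΔm.abs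
  set h : ℝ → ℝ := fun y => ∫ z, |Δ y z| ∂μ01
  have hhm : Measurable h := (hΔam.stronglyMeasurable.integral_prod_right).measurable
  have hh0 : ∀ y, 0 ≤ h y := fun y => integral_nonneg fun z => abs_nonneg _
  have hΔabs_bd : ∀ y ∈ I01, ∀ᵐ z ∂μ01, |Δ y z| ≤ 1 := by
    intro y hy
    filter_upwards [ae_mem01] with z hz
    have hr := hWr y hy z hz
    have hr' := hW'r y hy z hz
    show |W' y z - W y z| ≤ 1
    rw [abs_le]
    exact ⟨by linarith [hr.2, hr'.1], by linarith [hr.1, hr'.2]⟩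
  have hΔabs_int : ∀ y ∈ I01, Integrable (fun z => |Δ y z|) μ01 := by
    intro y hy
    refine (integrable_const (1:ℝ)).mono'
      (hΔam.of_uncurry_left.aestronglyMeasurable) ?_
    filter_upwards [hΔabs_bd y hy] with z hz
    rwa [Real.norm_eq_abs, abs_abs]
  have hh1 : ∀ y ∈ I01, h y ≤ 1 := by
    intro y hy
    calc h y ≤ ∫ _ , (1:ℝ) ∂μ01 :=
          integral_mono_ae (hΔabs_int y hy) (integrable_const 1) (hΔabs_bd y hy)
      _ = 1 := by simp
  -- sections of Δ² are integrable a.e.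
  have hsec : ∀ᵐ y ∂μ01, Integrable (fun z => Δ y z ^ 2) μ01 := hΔsq.prod_right_ae
  -- pointwise Cauchy-Schwarz for h
  have hh2 : ∀ᵐ y ∂μ01, h y ^ 2 ≤ ∫ z, Δ y z ^ 2 ∂μ01 := by
    filter_upwards [hsec] with y hy
    have hu : MemLp (fun z => |Δ y z|) 2 μ01 :=
      (memLp_two_iff_integrable_sq hΔam.of_uncurry_left.aestronglyMeasurable).mpr
        (hy.congr (Eventually.of_forall fun z => (sq_abs _).symm))
    have hv : MemLp (fun _ : ℝ => (1:ℝ)) 2 μ01 := memLp_const 1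
    have hcs := sq_integral_mul_le hu hv
    simp only [mul_one, one_pow, sq_abs] at hcs
    calc h y ^ 2 ≤ (∫ z, Δ y z ^ 2 ∂μ01) * ∫ _, (1:ℝ) ∂μ01 := hcs
      _ = ∫ z, Δ y z ^ 2 ∂μ01 := by simp
  -- h² integrable over μ01 and over the product
  have hhint : Integrable (fun y => h y ^ 2) μ01 := by
    refine (integrable_const (1:ℝ)).mono' ((hhm.pow_const 2).aestronglyMeasurable) ?_
    filter_upwards [ae_mem01] with y hy
    rw [Real.norm_eq_abs, abs_pow, abs_of_nonneg (hh0 y)]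
    calc h y ^ 2 ≤ 1 ^ 2 := pow_le_pow_left₀ (hh0 y) (hh1 y hy) 2
      _ = 1 := one_pow 2
  have hhprod : Integrable (fun q : ℝ × ℝ => h q.2 ^ 2) (μ01.prod μ01) := by
    refine (integrable_const (1:ℝ)).mono'
      (((hhm.comp measurable_snd).pow_const 2).aestronglyMeasurable) ?_
    filter_upwards [ae_mem01_prod] with q ⟨_, h2⟩
    rw [Real.norm_eq_abs, abs_pow, abs_of_nonneg (hh0 _)]
    calc h q.2 ^ 2 ≤ 1 ^ 2 := pow_le_pow_left₀ (hh0 _) (hh1 _ h2) 2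
      _ = 1 := one_pow 2
  -- ∫ h² ≤ E
  have hHle : (∫ y, h y ^ 2 ∂μ01) ≤ E := by
    calc ∫ y, h y ^ 2 ∂μ01 ≤ ∫ y, (∫ z, Δ y z ^ 2 ∂μ01) ∂μ01 :=
          integral_mono_ae hhint hΔsq.integral_prod_left hh2
      _ = E := MeasureTheory.integral_integral hΔsq
  -- marginal computation
  have hmarg : (∫ q : ℝ × ℝ, h q.2 ^ 2 ∂(μ01.prod μ01)) = ∫ y, h y ^ 2 ∂μ01 := by
    have hmm := MeasureTheory.integral_integral (μ := μ01) (ν := μ01)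
      (f := fun _ y => h y ^ 2) (by exact hhprod)
    rw [integral_const] at hmm
    simpa using hmm.symm
  -- pointwise bound on D²
  have hDbd : ∀ᵐ q : ℝ × ℝ ∂(μ01.prod μ01),
      D q.1 q.2 ^ 2 ≤ 2/c'^2 * Δ q.1 q.2 ^ 2 + 2/(c*c')^2 * h q.2 ^ 2 := by
    filter_upwards [ae_mem01_prod] with q ⟨h1, h2⟩
    obtain ⟨x, y⟩ := q
    simp only at h1 h2 ⊢
    have hky : c ≤ k y := hk y h2
    have hk'y : c' ≤ k' y := hk' y h2
    have hkpos : 0 < k y := lt_of_lt_of_le hc hky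
    have hk'pos : 0 < k' y := lt_of_lt_of_le hc' hk'y
    have hWb := hWr x h1 y h2
    have hW'b := hW'r x h1 y h2
    -- |k y - k' y| ≤ h y
    have hiW : Integrable (fun z => W y z) μ01 := by
      refine (integrable_const (1:ℝ)).mono' (hWm.of_uncurry_left.aestronglyMeasurable) ?_
      filter_upwards [ae_mem01] with z hz
      have hr := hWr y h2 z hz
      rw [Real.norm_eq_abs, abs_of_nonneg hr.1]; exact hr.2
    have hiW' : Integrable (fun z => W' y z) μ01 := by
      refine (integrable_const (1:ℝ)).mono' (hW'm.of_uncurry_left.aestronglyMeasurable) ?_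
      filter_upwards [ae_mem01] with z hz
      have hr := hW'r y h2 z hz
      rw [Real.norm_eq_abs, abs_of_nonneg hr.1]; exact hr.2
    have hkd : |k y - k' y| ≤ h y := by
      show |(∫ z in I01, W y z) - ∫ z in I01, W' y z| ≤ ∫ z, |Δ y z| ∂μ01
      rw [← integral_sub hiW hiW']
      calc |∫ z, (W y z - W' y z) ∂μ01| = ‖∫ z, (W y z - W' y z) ∂μ01‖ :=
            (Real.norm_eq_abs _).symm
        _ ≤ ∫ z, ‖W y z - W' y z‖ ∂μ01 := norm_integral_le_integral_norm _
        _ = ∫ z, |Δ y z| ∂μ01 := by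
            refine integral_congr_ae (Eventually.of_forall fun z => ?_)
            show ‖W y z - W' y z‖ = |W' y z - W y z|
            rw [Real.norm_eq_abs, abs_sub_comm]
    -- algebraic identity
    have hid : D x y = Δ x y / k' y + W x y * (k y - k' y) / (k' y * k y) := by
      show W' x y / k' y - W x y / k y
          = (W' x y - W x y) / k' y + W x y * (k y - k' y) / (k' y * k y)
      field_simp
      ring
    -- bound on |D|
    have hb1 : |Δ x y / k' y| ≤ |Δ x y| / c' := by
      rw [abs_div, abs_of_pos hk'pos]
      gcongr
    have hb2 : |W x y * (k y - k' y) / (k' y * k y)| ≤ h y / (c' * c) := by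
      rw [abs_div, abs_mul, abs_of_pos (mul_pos hk'pos hkpos)]
      have hnum : |W x y| * |k y - k' y| ≤ 1 * h y := by
        have h1' : |W x y| ≤ 1 := by rw [abs_of_nonneg hWb.1]; exact hWb.2
        exact mul_le_mul h1' hkd (abs_nonneg _) zero_le_one
      calc |W x y| * |k y - k' y| / (k' y * k y) ≤ (1 * h y) / (c' * c) := by
            apply div_le_div₀ (by positivity) hnum (by positivity)
            exact mul_le_mul hk'y hky hc.le (by positivity)
        _ = h y / (c' * c) := by rw [one_mul]
    have hup : |D x y| ≤ |Δ x y| / c' + h y / (c * c') := by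
      calc |D x y| ≤ |Δ x y / k' y| + |W x y * (k y - k' y) / (k' y * k y)| := by
            rw [hid]; exact abs_add_le _ _
        _ ≤ |Δ x y| / c' + h y / (c' * c) := add_le_add hb1 hb2
        _ = |Δ x y| / c' + h y / (c * c') := by rw [mul_comm c' c]
    have hsq := pow_le_pow_left₀ (abs_nonneg _) hup 2
    rw [sq_abs] at hsq
    refine hsq.trans ?_
    calc (|Δ x y| / c' + h y / (c * c')) ^ 2
        ≤ 2*(|Δ x y| / c')^2 + 2*(h y / (c * c'))^2 := by
          nlinarith [sq_nonneg (|Δ x y| / c' - h y / (c * c'))]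
      _ = 2/c'^2 * Δ x y ^ 2 + 2/(c*c')^2 * h y ^ 2 := by
          rw [div_pow, div_pow, sq_abs]; ring
  -- D² is integrable
  have hDsqInt : Integrable (fun q : ℝ × ℝ => D q.1 q.2 ^ 2) (μ01.prod μ01) := by
    refine ((hΔsq.const_mul (2/c'^2)).add (hhprod.const_mul (2/(c*c')^2))).mono'
      ((hDm.pow_const 2).aestronglyMeasurable) ?_
    filter_upwards [hDbd] with q hq
    rw [Real.norm_eq_abs, abs_of_nonneg (sq_nonneg _)]
    exact hq
  -- the integral bound
  have hintD : (∫ q : ℝ × ℝ, D q.1 q.2 ^ 2 ∂(μ01.prod μ01))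
      ≤ (2/c'^2 + 2/(c*c')^2) * E := by
    calc ∫ q : ℝ × ℝ, D q.1 q.2 ^ 2 ∂(μ01.prod μ01)
        ≤ ∫ q : ℝ × ℝ, (2/c'^2 * Δ q.1 q.2 ^ 2 + 2/(c*c')^2 * h q.2 ^ 2) ∂(μ01.prod μ01) :=
          integral_mono_ae hDsqInt
            ((hΔsq.const_mul (2/c'^2)).add (hhprod.const_mul (2/(c*c')^2))) hDbd
      _ = 2/c'^2 * E + 2/(c*c')^2 * ∫ q : ℝ × ℝ, h q.2 ^ 2 ∂(μ01.prod μ01) := by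
          rw [integral_add (hΔsq.const_mul (2/c'^2)) (hhprod.const_mul (2/(c*c')^2)),
            integral_const_mul, integral_const_mul]
      _ = 2/c'^2 * E + 2/(c*c')^2 * ∫ y, h y ^ 2 ∂μ01 := by rw [hmarg]
      _ ≤ 2/c'^2 * E + 2/(c*c')^2 * E := by
          have := mul_le_mul_of_nonneg_left hHle (by positivity : (0:ℝ) ≤ 2/(c*c')^2)
          linarith
      _ = (2/c'^2 + 2/(c*c')^2) * E := by ring
  -- representation of T by the kernel D
  have hT' : ∀ f : L2, (T f : ℝ → ℝ) =ᵐ[μ01] fun x => ∫ y, D x y * f y ∂μ01 := by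
    intro f
    refine (hT f).trans ?_
    filter_upwards [ae_mem01] with x hx
    have hdomf : Integrable (fun y => ‖(f : ℝ → ℝ) y‖) μ01 :=
      ((Lp.memLp f).integrable one_le_two).norm
    have I1 : Integrable (fun y => (W' x y / k' y) * f y) μ01 := by
      refine (hdomf.const_mul (1/c')).mono'
        ((hW'm.of_uncurry_left.div hk'm).aestronglyMeasurable.mul
          (Lp.aestronglyMeasurable f)) ?_
      filter_upwards [ae_mem01] with y hy
      have hr := hW'r x hx y hy
      have hk'y : c' ≤ k' y := hk' y hy
      rw [norm_mul]
      refine mul_le_mul_of_nonneg_right ?_ (norm_nonneg _) |>.trans_eq rfl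
      rw [Real.norm_eq_abs, abs_div, abs_of_nonneg hr.1, abs_of_pos (lt_of_lt_of_le hc' hk'y)]
      calc W' x y / k' y ≤ 1 / c' := div_le_div₀ zero_le_one hr.2 hc' hk'y
        _ = 1/c' := rfl
    have I2 : Integrable (fun y => (W x y / k y) * f y) μ01 := by
      refine (hdomf.const_mul (1/c)).mono'
        ((hWm.of_uncurry_left.div hkm).aestronglyMeasurable.mul
          (Lp.aestronglyMeasurable f)) ?_
      filter_upwards [ae_mem01] with y hy
      have hr := hWr x hx y hy
      have hky : c ≤ k y := hk y hy
      rw [norm_mul]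
      refine mul_le_mul_of_nonneg_right ?_ (norm_nonneg _) |>.trans_eq rfl
      rw [Real.norm_eq_abs, abs_div, abs_of_nonneg hr.1, abs_of_pos (lt_of_lt_of_le hc hky)]
      exact div_le_div₀ zero_le_one hr.2 hc hky
    show (∫ y, (W' x y / k' y) * f y ∂μ01) - (∫ y, (W x y / k y) * f y ∂μ01)
        = ∫ y, D x y * f y ∂μ01
    rw [← integral_sub I1 I2]
    refine integral_congr_ae (Eventually.of_forall fun y => ?_)
    show (W' x y / k' y) * f y - (W x y / k y) * f y = (W' x y / k' y - W x y / k y) * f y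
    ring
  exact opNorm_le_of_kernel D hDm hDsqInt T hT' _ (Real.sqrt_nonneg _)
    (by rw [Real.sq_sqrt (by positivity)]; exact hintD)

lemma diff_sq_integrable (W W' : ℝ → ℝ → ℝ)
    (hWm : Measurable (Function.uncurry W)) (hW'm : Measurable (Function.uncurry W'))
    (hWr : ∀ x ∈ I01, ∀ y ∈ I01, W x y ∈ Set.Icc (0:ℝ) 1)
    (hW'r : ∀ x ∈ I01, ∀ y ∈ I01, W' x y ∈ Set.Icc (0:ℝ) 1) :
    Integrable (fun q : ℝ × ℝ => (W' q.1 q.2 - W q.1 q.2) ^ 2) (μ01.prod μ01) := by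
  refine (integrable_const (1:ℝ)).mono'
    (((hW'm.sub hWm).pow_const 2).aestronglyMeasurable) ?_
  filter_upwards [ae_mem01_prod] with q ⟨h1, h2⟩
  have hr := hWr q.1 h1 q.2 h2
  have hr' := hW'r q.1 h1 q.2 h2
  have habs : |W' q.1 q.2 - W q.1 q.2| ≤ 1 := by
    rw [abs_le]
    exact ⟨by linarith [hr.2, hr'.1], by linarith [hr.1, hr'.2]⟩
  calc ‖(W' q.1 q.2 - W q.1 q.2) ^ 2‖ = |W' q.1 q.2 - W q.1 q.2| ^ 2 := by
        rw [Real.norm_eq_abs, abs_pow]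
    _ ≤ 1 ^ 2 := pow_le_pow_left₀ (abs_nonneg _) habs 2
    _ = 1 := one_pow 2

/-- Convergence for a sequence of discrete problems.  Let `W` be a connected
graphon with degree function `k ≥ c > 0` and random-walk Laplacian
`ℒ = 𝒦 - I`.  Let `(W_n)` be a sequence of connected graphons with
`‖W_n - W‖_{L²([0,1]²)} → 0` whose degree functions are bounded below by
`c' > 0` for all sufficiently large `n`, with random-walk Laplacians
`ℒ_n = 𝒦_n - I`, and let `g_n → g` in `L²[0,1]`.  Then for every `t ≥ 0`,
`‖e^{tℒ_n} g_n - e^{tℒ} g‖₂ → 0` as `n → ∞`. -/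
theorem convergence_graph_sequence
    (W : ℝ → ℝ → ℝ)
    (hWmeas : Measurable (Function.uncurry W))
    (hWsymm : ∀ x ∈ I01, ∀ y ∈ I01, W x y = W y x)
    (hWrange : ∀ x ∈ I01, ∀ y ∈ I01, W x y ∈ Set.Icc (0 : ℝ) 1)
    (hWconn : ∀ S : Set ℝ, MeasurableSet S → S ⊆ I01 →
      0 < volume S → volume S < 1 →
      0 < ∫ x in S, ∫ y in I01 \ S, W x y)
    (c : ℝ) (hc : 0 < c)
    (hk : ∀ x ∈ I01, c ≤ ∫ y in I01, W x y)
    (Wn : ℕ → ℝ → ℝ → ℝ)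
    (hWnmeas : ∀ n, Measurable (Function.uncurry (Wn n)))
    (hWnsymm : ∀ n, ∀ x ∈ I01, ∀ y ∈ I01, Wn n x y = Wn n y x)
    (hWnrange : ∀ n, ∀ x ∈ I01, ∀ y ∈ I01, Wn n x y ∈ Set.Icc (0 : ℝ) 1)
    (hWnconn : ∀ n, ∀ S : Set ℝ, MeasurableSet S → S ⊆ I01 →
      0 < volume S → volume S < 1 →
      0 < ∫ x in S, ∫ y in I01 \ S, Wn n x y)
    (hWnconv : Tendsto (fun n : ℕ =>
        eLpNorm (fun q : ℝ × ℝ => Wn n q.1 q.2 - W q.1 q.2) 2 (μ01.prod μ01))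
      atTop (nhds 0))
    (c' : ℝ) (hc' : 0 < c') (N : ℕ)
    (hkn : ∀ n : ℕ, N ≤ n → ∀ y ∈ I01, c' ≤ ∫ z in I01, Wn n y z)
    (Kop : L2 →L[ℝ] L2)
    (hKop : ∀ f : L2, (Kop f : ℝ → ℝ) =ᵐ[μ01]
      fun x => ∫ y in I01, (W x y / ∫ z in I01, W y z) * f y)
    (Knop : ℕ → L2 →L[ℝ] L2)
    (hKnop : ∀ n : ℕ, N ≤ n → ∀ f : L2, (Knop n f : ℝ → ℝ) =ᵐ[μ01]
      fun x => ∫ y in I01, (Wn n x y / ∫ z in I01, Wn n y z) * f y)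
    (g : L2) (gn : ℕ → L2)
    (hgn : Tendsto (fun n : ℕ => ‖gn n - g‖) atTop (nhds 0))
    (t : ℝ) (ht : 0 ≤ t) :
    Tendsto (fun n : ℕ =>
        ‖NormedSpace.exp (t • (Knop n - 1)) (gn n) -
          NormedSpace.exp (t • (Kop - 1)) g‖)
      atTop (nhds 0) := by
  -- the squared L² distances between the graphons
  set En : ℕ → ℝ := fun n =>
    ∫ q : ℝ × ℝ, (Wn n q.1 q.2 - W q.1 q.2) ^ 2 ∂(μ01.prod μ01) with hEndef
  have hInt : ∀ n, Integrable (fun q : ℝ × ℝ => (Wn n q.1 q.2 - W q.1 q.2) ^ 2)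
      (μ01.prod μ01) := fun n =>
    diff_sq_integrable W (Wn n) hWmeas (hWnmeas n) hWrange (hWnrange n)
  have hMem : ∀ n, MemLp (fun q : ℝ × ℝ => Wn n q.1 q.2 - W q.1 q.2) 2 (μ01.prod μ01) :=
    fun n => (memLp_two_iff_integrable_sq
      (((hWnmeas n).sub hWmeas).aestronglyMeasurable)).mpr (hInt n)
  have hEn0 : ∀ n, 0 ≤ En n := fun n => integral_nonneg fun q => sq_nonneg _
  -- relate En to the eLpNorm
  have hEeq : ∀ n, En n =
      ((eLpNorm (fun q : ℝ × ℝ => Wn n q.1 q.2 - W q.1 q.2) 2 (μ01.prod μ01)).toReal) ^ 2 := by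
    intro n
    have hX0 : (0:ℝ) ≤ ∫ q : ℝ × ℝ, ‖Wn n q.1 q.2 - W q.1 q.2‖ ^ (2:ℝ) ∂(μ01.prod μ01) :=
      integral_nonneg fun q => by positivity
    have hs := (hMem n).eLpNorm_eq_integral_rpow_norm
      (by norm_num) (by norm_num)
    have h2t : ((2:ENNReal)).toReal = (2:ℝ) := by norm_num
    rw [h2t] at hs
    rw [hs, ENNReal.toReal_ofReal (Real.rpow_nonneg hX0 _)]
    rw [← Real.rpow_natCast ((∫ q : ℝ × ℝ, ‖Wn n q.1 q.2 - W q.1 q.2‖ ^ (2:ℝ)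
        ∂(μ01.prod μ01)) ^ ((2:ℝ)⁻¹)) 2, ← Real.rpow_mul hX0]
    norm_num
    rfl
  -- En → 0
  have h1 : Tendsto (fun n =>
      (eLpNorm (fun q : ℝ × ℝ => Wn n q.1 q.2 - W q.1 q.2) 2 (μ01.prod μ01)).toReal)
      atTop (nhds 0) := by
    have := (ENNReal.tendsto_toReal (by simp)).comp hWnconv
    simpa [Function.comp_def] using this
  have hElim : Tendsto En atTop (nhds 0) := by
    have h2 := h1.pow 2
    rw [zero_pow (two_ne_zero)] at h2
    exact h2.congr fun n => (hEeq n).symm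
  -- the majorant of the operator norms
  set C : ℝ := 2/c'^2 + 2/(c*c')^2 with hCdef
  have hC0 : 0 ≤ C := by positivity
  set M : ℕ → ℝ := fun n => Real.sqrt (C * En n) with hMdef
  have hMlim : Tendsto M atTop (nhds 0) := by
    have h3 : Tendsto (fun n => C * En n) atTop (nhds 0) := by
      simpa using hElim.const_mul C
    have h4 := (Real.continuous_sqrt.tendsto 0).comp h3
    simpa [Function.comp_def, hMdef] using h4
  -- eventual operator norm bound
  have hbound : ∀ᶠ n in atTop, ‖Knop n - Kop‖ ≤ M n := by
    filter_upwards [eventually_ge_atTop N] with n hn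
    refine kernel_diff_opNorm_le W (Wn n) hWmeas (hWnmeas n) hWrange (hWnrange n)
      c c' hc hc' hk (hkn n hn) (Knop n - Kop) ?_
    intro f
    have h1' : ((Knop n - Kop) f : ℝ → ℝ) =ᵐ[μ01]
        fun x => (Knop n f : ℝ → ℝ) x - (Kop f : ℝ → ℝ) x := by
      have he : (Knop n - Kop) f = Knop n f - Kop f := rfl
      rw [he]
      filter_upwards [Lp.coeFn_sub (Knop n f) (Kop f)] with x hx
      simpa using hx
    refine h1'.trans ?_
    filter_upwards [hKnop n hn f, hKop f] with x h2 h3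
    simp only [h2, h3]
  -- operator convergence
  have hKlim : Tendsto (fun n => ‖Knop n - Kop‖) atTop (nhds 0) :=
    squeeze_zero' (Eventually.of_forall fun n => norm_nonneg _) hbound hMlim
  have htend : Tendsto (fun n => Knop n) atTop (nhds Kop) :=
    tendsto_iff_norm_sub_tendsto_zero.mpr hKlim
  -- exponential convergence
  have hA : Tendsto (fun n => t • (Knop n - 1)) atTop (nhds (t • (Kop - 1))) :=
    (htend.sub tendsto_const_nhds).const_smul t
  let +nondep : NormedAlgebra ℚ (L2 →L[ℝ] L2) := NormedAlgebra.restrictScalars ℚ ℝ _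
  have hexp : Tendsto (fun n => NormedSpace.exp (t • (Knop n - 1))) atTop
      (nhds (NormedSpace.exp (t • (Kop - 1)))) :=
    (NormedSpace.exp_continuous.tendsto _).comp hA
  set E : L2 →L[ℝ] L2 := NormedSpace.exp (t • (Kop - 1)) with hEdef
  set En' : ℕ → L2 →L[ℝ] L2 := fun n => NormedSpace.exp (t • (Knop n - 1)) with hEn'def
  -- final squeeze
  have hfinal : ∀ n, ‖En' n (gn n) - E g‖ ≤ ‖En' n‖ * ‖gn n - g‖ + ‖En' n - E‖ * ‖g‖ := by
    intro n
    calc ‖En' n (gn n) - E g‖ = ‖En' n (gn n - g) + (En' n - E) g‖ := by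
          congr 1
          rw [map_sub, ContinuousLinearMap.sub_apply]
          abel
      _ ≤ ‖En' n (gn n - g)‖ + ‖(En' n - E) g‖ := norm_add_le _ _
      _ ≤ ‖En' n‖ * ‖gn n - g‖ + ‖En' n - E‖ * ‖g‖ :=
          add_le_add ((En' n).le_opNorm _) ((En' n - E).le_opNorm _)
  have hrhs : Tendsto (fun n => ‖En' n‖ * ‖gn n - g‖ + ‖En' n - E‖ * ‖g‖) atTop (nhds 0) := by
    have ha : Tendsto (fun n => ‖En' n‖ * ‖gn n - g‖) atTop (nhds (‖E‖ * 0)) :=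
      (hexp.norm).mul hgn
    have hb : Tendsto (fun n => ‖En' n - E‖ * ‖g‖) atTop (nhds (0 * ‖g‖)) :=
      (tendsto_iff_norm_sub_tendsto_zero.mp hexp).mul_const ‖g‖
    have hc2 := ha.add hb
    rw [mul_zero, zero_mul, add_zero] at hc2
    exact hc2
  exact squeeze_zero (fun n => norm_nonneg _) hfinal hrhs
end
end

section
/- Let W be a connected graphon and let g : [0,1] → ℝ be a measurable function such that ∫₀¹∫₀¹ W(x,y) ( g(x) − g(y) )² dx dy = 0. Then g is constant almost everywhere on [0,1]. In particular, if in addition the degree function k of W satisfies k ≥ c > 0, then the eigenspace of the normalized Laplacian ℒ^{norm} = 𝒜^{norm} − I for the eigenvalue 0 is one-dimensional, spanned by √k. -/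
open MeasureTheory Set Filter

noncomputable section

lemma volume_I01 : volume I01 = 1 := by simp [Real.volume_Icc]

lemma aux_part1 (W : ℝ → ℝ → ℝ)
    (hWmeas : Measurable (Function.uncurry W))
    (hWpos : ∀ x ∈ I01, ∀ y ∈ I01, 0 ≤ W x y)
    (hWconn : ∀ S : Set ℝ, MeasurableSet S → S ⊆ I01 →
      0 < volume S → volume S < 1 →
      0 < ∫ x in S, ∫ y in I01 \ S, W x y)
    (g : ℝ → ℝ) (hg : Measurable g)
    (hE : (∫⁻ x in I01, ∫⁻ y in I01, ENNReal.ofReal (W x y * (g x - g y) ^ 2)) = 0) :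
    ∃ a : ℝ, ∀ᵐ x ∂μ01, g x = a := by
  have hFm : Measurable fun z : ℝ × ℝ => ENNReal.ofReal (W z.1 z.2 * (g z.1 - g z.2) ^ 2) := by
    apply Measurable.ennreal_ofReal
    exact hWmeas.mul (((hg.comp measurable_fst).sub (hg.comp measurable_snd)).pow_const 2)
  have h1 : ∀ᵐ x ∂μ01, ∫⁻ y in I01, ENNReal.ofReal (W x y * (g x - g y) ^ 2) = 0 := by
    rw [lintegral_eq_zero_iff hFm.lintegral_prod_right'] at hE
    exact hE
  have hae : ∀ᵐ x ∂μ01, ∀ᵐ y ∂μ01, W x y * (g x - g y) ^ 2 ≤ 0 := by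
    filter_upwards [h1] with x hx
    have hm : Measurable fun y => ENNReal.ofReal (W x y * (g x - g y) ^ 2) :=
      hFm.comp measurable_prodMk_left
    have := (lintegral_eq_zero_iff hm).mp hx
    filter_upwards [this] with y hy
    exact ENNReal.ofReal_eq_zero.mp hy
  -- dichotomy
  have hdich : ∀ t : ℝ, volume (I01 ∩ {x | g x ≤ t}) = 0 ∨ volume (I01 ∩ {x | g x ≤ t}) = 1 := by
    intro t
    set S := I01 ∩ {x | g x ≤ t} with hSdef
    have hSm : MeasurableSet S := measurableSet_Icc.inter (hg measurableSet_Iic)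
    by_contra h
    push_neg at h
    have hle : volume S ≤ 1 := by
      calc volume S ≤ volume I01 := measure_mono inter_subset_left
        _ = 1 := volume_I01
    have hpos : 0 < volume S := pos_iff_ne_zero.mpr h.1
    have hlt : volume S < 1 := lt_of_le_of_ne hle h.2
    have hW := hWconn S hSm inter_subset_left hpos hlt
    have hzero : ∀ᵐ x ∂(volume.restrict S), (∫ y in I01 \ S, W x y) = 0 := by
      have hsub : ∀ᵐ x ∂(volume.restrict S), ∀ᵐ y ∂μ01, W x y * (g x - g y) ^ 2 ≤ 0 :=
        ae_restrict_of_ae_restrict_of_subset inter_subset_left hae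
      filter_upwards [hsub, ae_restrict_mem hSm] with x hx hxS
      apply integral_eq_zero_of_ae
      have hy : ∀ᵐ y ∂(volume.restrict (I01 \ S)), W x y * (g x - g y) ^ 2 ≤ 0 :=
        ae_restrict_of_ae_restrict_of_subset diff_subset hx
      filter_upwards [hy, ae_restrict_mem (measurableSet_Icc.diff hSm)] with y h1 h2
      have hxI : x ∈ I01 := hxS.1
      have hgx : g x ≤ t := hxS.2
      have hyI : y ∈ I01 := h2.1
      have hgy : t < g y := lt_of_not_ge fun hle' => h2.2 ⟨hyI, hle'⟩
      have hsq : 0 < (g x - g y) ^ 2 := by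
        have : g x - g y ≠ 0 := by intro h0; nlinarith
        positivity
      have hWnn : 0 ≤ W x y := hWpos x hxI y hyI
      show W x y = 0
      nlinarith
    have : (∫ x in S, ∫ y in I01 \ S, W x y) = 0 := integral_eq_zero_of_ae hzero
    rw [this] at hW
    exact lt_irrefl 0 hW
  have hmono : ∀ {s t : ℝ}, s ≤ t → I01 ∩ {x | g x ≤ s} ⊆ I01 ∩ {x | g x ≤ t} := by
    intro s t hst x hx
    exact ⟨hx.1, le_trans hx.2 hst⟩
  -- there is n with measure 1
  obtain ⟨n, hn⟩ : ∃ n : ℕ, volume (I01 ∩ {x | g x ≤ (n : ℝ)}) = 1 := by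
    by_contra h
    push_neg at h
    have h0 : ∀ n : ℕ, volume (I01 ∩ {x | g x ≤ (n : ℝ)}) = 0 :=
      fun n => (hdich n).resolve_right (h n)
    have hU : (⋃ n : ℕ, (I01 ∩ {x | g x ≤ (n : ℝ)})) = I01 := by
      ext x
      simp only [mem_iUnion, mem_inter_iff, mem_setOf_eq]
      constructor
      · rintro ⟨n, hn, -⟩; exact hn
      · intro hx
        obtain ⟨n, hn⟩ := exists_nat_ge (g x)
        exact ⟨n, hx, hn⟩
    have := measure_iUnion_null h0
    rw [hU, volume_I01] at this
    exact one_ne_zero this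
  -- there is m with measure 0
  obtain ⟨m, hm⟩ : ∃ m : ℕ, volume (I01 ∩ {x | g x ≤ -(m : ℝ)}) = 0 := by
    by_contra h
    push_neg at h
    have h1 : ∀ m : ℕ, volume (I01 \ (I01 ∩ {x | g x ≤ -(m : ℝ)})) = 0 := by
      intro m
      have hv := (hdich (-(m : ℝ))).resolve_left (h m)
      have hSm : MeasurableSet (I01 ∩ {x | g x ≤ -(m : ℝ)}) :=
        measurableSet_Icc.inter (hg measurableSet_Iic)
      rw [measure_diff inter_subset_left hSm.nullMeasurableSet (by simp [hv]), hv, volume_I01,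
        tsub_self]
    have hU : (⋃ m : ℕ, (I01 \ (I01 ∩ {x | g x ≤ -(m : ℝ)}))) = I01 := by
      ext x
      simp only [mem_iUnion, mem_diff, mem_inter_iff, mem_setOf_eq]
      constructor
      · rintro ⟨m, hm, -⟩; exact hm
      · intro hx
        obtain ⟨m, hm⟩ := exists_nat_gt (-(g x))
        refine ⟨m, hx, fun hmem => ?_⟩
        have := hmem.2
        linarith
    have := measure_iUnion_null h1
    rw [hU, volume_I01] at this
    exact one_ne_zero this
  set T := {t : ℝ | volume (I01 ∩ {x | g x ≤ t}) = 1} with hTdef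
  have hTne : T.Nonempty := ⟨(n : ℝ), hn⟩
  have hTbd : BddBelow T := by
    refine ⟨-(m : ℝ), fun t ht => ?_⟩
    by_contra ht'
    push_neg at ht'
    have htv : volume (I01 ∩ {x | g x ≤ t}) = 1 := ht
    have := measure_mono (μ := volume) (hmono (le_of_lt ht'))
    rw [htv, hm] at this
    simp at this
  set a := sInf T with hadef
  refine ⟨a, ?_⟩
  have hmu : ∀ t : ℝ, μ01 {x | g x ≤ t} = volume (I01 ∩ {x | g x ≤ t}) := by
    intro t
    rw [Measure.restrict_apply (measurableSet_le hg measurable_const), inter_comm]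
  have hgt : μ01 {x | a < g x} = 0 := by
    have hsub : {x | a < g x} ⊆ ⋃ q : ℚ, {x | a < (q : ℝ) ∧ (q : ℝ) < g x} := by
      intro x hx
      have hx' : a < g x := hx
      obtain ⟨q, hq1, hq2⟩ := exists_rat_btwn hx'
      exact mem_iUnion.mpr ⟨q, hq1, hq2⟩
    refine measure_mono_null hsub (measure_iUnion_null fun q => ?_)
    by_cases hq : a < (q : ℝ)
    · obtain ⟨t, htT, htq⟩ := exists_lt_of_csInf_lt hTne hq
      have hzero : μ01 {x | ¬ g x ≤ t} = 0 := by
        have hcompl : {x | ¬ g x ≤ t} = {x | g x ≤ t}ᶜ := rfl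
        rw [hcompl, measure_compl (measurableSet_le hg measurable_const) (measure_ne_top _ _), hmu t, htT]
        have : μ01 univ = 1 := by
          rw [Measure.restrict_apply_univ, volume_I01]
        rw [this, tsub_self]
      refine measure_mono_null (fun x hx => ?_) hzero
      exact not_le.mpr (lt_trans htq hx.2)
    · have : {x | a < (q : ℝ) ∧ (q : ℝ) < g x} = ∅ := by
        ext x; simp only [mem_setOf_eq, mem_empty_iff_false, iff_false]
        rintro ⟨h1, -⟩; exact hq h1
      simp [this]
  have hlt : μ01 {x | g x < a} = 0 := by
    have hsub : {x | g x < a} ⊆ ⋃ q : ℚ, {x | g x ≤ (q : ℝ) ∧ (q : ℝ) < a} := by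
      intro x hx
      have hx' : g x < a := hx
      obtain ⟨q, hq1, hq2⟩ := exists_rat_btwn hx'
      exact mem_iUnion.mpr ⟨q, le_of_lt hq1, hq2⟩
    refine measure_mono_null hsub (measure_iUnion_null fun q => ?_)
    by_cases hq : (q : ℝ) < a
    · have hqT : (q : ℝ) ∉ T := fun hmem => absurd (csInf_le hTbd hmem) (not_le.mpr hq)
      have hzero : volume (I01 ∩ {x | g x ≤ (q : ℝ)}) = 0 := (hdich q).resolve_right hqT
      have : μ01 {x | g x ≤ (q : ℝ)} = 0 := by rw [hmu, hzero]
      exact measure_mono_null (fun x hx => hx.1) this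
    · have : {x | g x ≤ (q : ℝ) ∧ (q : ℝ) < a} = ∅ := by
        ext x; simp only [mem_setOf_eq, mem_empty_iff_false, iff_false]
        rintro ⟨-, h2⟩; exact hq h2
      simp [this]
  have : μ01 {x | g x ≠ a} = 0 := by
    refine measure_mono_null (fun x hx => ?_) (measure_union_null hgt hlt)
    rcases lt_or_gt_of_ne (Ne.symm hx) with h | h
    · exact Or.inl (show a < g x from h)
    · exact Or.inr (show g x < a from h)
  exact ae_iff.mpr this

/-- Let `W` be a connected graphon.  Every measurable `g` with vanishing
Dirichlet energy `∫₀¹∫₀¹ W x y (g x - g y)² dy dx = 0` is a.e. constant on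
`[0,1]`.  In particular, if the degree function satisfies `k ≥ c > 0`, the
eigenspace of the normalized Laplacian `ℒ^{norm} = 𝒜^{norm} - I` for the
eigenvalue `0` is one-dimensional, spanned by `√k`. -/
theorem zero_dirichlet_energy_constant
    (W : ℝ → ℝ → ℝ)
    (hWmeas : Measurable (Function.uncurry W))
    (hWsymm : ∀ x ∈ I01, ∀ y ∈ I01, W x y = W y x)
    (hWrange : ∀ x ∈ I01, ∀ y ∈ I01, W x y ∈ Set.Icc (0 : ℝ) 1)
    (hWconn : ∀ S : Set ℝ, MeasurableSet S → S ⊆ I01 →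
      0 < volume S → volume S < 1 →
      0 < ∫ x in S, ∫ y in I01 \ S, W x y)
    (c : ℝ) (hc : 0 < c)
    (hk : ∀ x ∈ I01, c ≤ ∫ y in I01, W x y)
    (Anorm : L2 →L[ℝ] L2)
    (hAnorm : ∀ f : L2, (Anorm f : ℝ → ℝ) =ᵐ[μ01]
      fun x => ∫ y in I01,
        (W x y / Real.sqrt ((∫ z in I01, W x z) * ∫ z in I01, W y z)) * f y) :
    (∀ g : ℝ → ℝ, Measurable g →
      (∫⁻ x in I01, ∫⁻ y in I01, ENNReal.ofReal (W x y * (g x - g y) ^ 2)) = 0 →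
      ∃ a : ℝ, ∀ᵐ x ∂μ01, g x = a) ∧
    (∀ f : L2, (Anorm - 1) f = 0 →
      ∃ γ : ℝ, (f : ℝ → ℝ) =ᵐ[μ01]
        fun x => γ * Real.sqrt (∫ z in I01, W x z)) := by
  have part1 : ∀ g : ℝ → ℝ, Measurable g →
      (∫⁻ x in I01, ∫⁻ y in I01, ENNReal.ofReal (W x y * (g x - g y) ^ 2)) = 0 →
      ∃ a : ℝ, ∀ᵐ x ∂μ01, g x = a :=
    fun g hg hE =>
      aux_part1 W hWmeas (fun x hx y hy => (hWrange x hx y hy).1) hWconn g hg hE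
  refine ⟨part1, ?_⟩
  intro f hf
  have heig : (f : ℝ → ℝ) =ᵐ[μ01]
      fun x => ∫ y in I01,
        (W x y / Real.sqrt ((∫ z in I01, W x z) * ∫ z in I01, W y z)) * f y := by
    have h := hAnorm f
    have hAf : Anorm f = f := by
      have h0 := hf
      rw [ContinuousLinearMap.sub_apply, ContinuousLinearMap.one_apply, sub_eq_zero] at h0
      exact h0
    rwa [hAf] at h
  have hIprob : IsProbabilityMeasure μ01 :=
    ⟨by rw [Measure.restrict_apply_univ]; simp [Real.volume_Icc]⟩
  set k : ℝ → ℝ := fun x => ∫ y in I01, W x y with hkdef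
  have hku : Measurable (Function.uncurry W) := hWmeas
  have hkm : Measurable k := by
    have : StronglyMeasurable fun x => ∫ y, (Function.uncurry W) (x, y) ∂μ01 :=
      hWmeas.stronglyMeasurable.integral_prod_right'
    exact this.measurable
  have hfs : StronglyMeasurable (⇑f) := Lp.stronglyMeasurable f
  have hfm : Measurable (⇑f) := hfs.measurable
  set g : ℝ → ℝ := fun x => f x / Real.sqrt (k x) with hgdef
  have hgm : Measurable g := hfm.div (hkm.sqrt)
  -- basic bounds on k
  have hkc : ∀ x ∈ I01, c ≤ k x := hk
  -- f square integrable, f integrable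
  have hf2 : Integrable (fun x => f x ^ 2) μ01 := (Lp.memLp f).integrable_sq
  have hf1 : Integrable (⇑f) μ01 := (Lp.memLp f).integrable (by norm_num)
  -- g square integrable
  have hgsq : ∀ x ∈ I01, g x ^ 2 = f x ^ 2 / k x := by
    intro x hx
    have hkx : 0 < k x := lt_of_lt_of_le hc (hkc x hx)
    rw [hgdef]
    simp only [div_pow, Real.sq_sqrt hkx.le]
  have hg2 : Integrable (fun x => g x ^ 2) μ01 := by
    refine (hf2.const_mul (1 / c)).mono' ((hgm.pow_const 2).aestronglyMeasurable) ?_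
    filter_upwards [ae_restrict_mem measurableSet_Icc] with x hx
    have hkx : 0 < k x := lt_of_lt_of_le hc (hkc x hx)
    rw [Real.norm_eq_abs, abs_of_nonneg (sq_nonneg _), hgsq x hx, one_div, inv_mul_eq_div]
    exact div_le_div_of_nonneg_left (sq_nonneg _) hc (hkc x hx)
  have hg1 : Integrable g μ01 := by
    refine (hf1.abs.const_mul (1 / Real.sqrt c)).mono' hgm.aestronglyMeasurable ?_
    filter_upwards [ae_restrict_mem measurableSet_Icc] with x hx
    have hkx : 0 < k x := lt_of_lt_of_le hc (hkc x hx)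
    have hs : Real.sqrt c ≤ Real.sqrt (k x) := Real.sqrt_le_sqrt (hkc x hx)
    have hsc : 0 < Real.sqrt c := Real.sqrt_pos.mpr hc
    rw [Real.norm_eq_abs, hgdef]
    simp only [abs_div, abs_of_nonneg (Real.sqrt_nonneg (k x))]
    rw [one_div, inv_mul_eq_div]
    exact div_le_div_of_nonneg_left (abs_nonneg _) hsc hs
  -- membership a.e. on product
  have hprodmem : ∀ᵐ z : ℝ × ℝ ∂(μ01.prod μ01), z.1 ∈ I01 ∧ z.2 ∈ I01 := by
    rw [Measure.prod_restrict]
    filter_upwards [ae_restrict_mem (measurableSet_Icc.prod measurableSet_Icc)] with z hz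
    exact ⟨hz.1, hz.2⟩
  have hWb : ∀ᵐ z : ℝ × ℝ ∂(μ01.prod μ01), 0 ≤ W z.1 z.2 ∧ W z.1 z.2 ≤ 1 := by
    filter_upwards [hprodmem] with z hz
    exact ⟨(hWrange z.1 hz.1 z.2 hz.2).1, (hWrange z.1 hz.1 z.2 hz.2).2⟩
  -- integrable pieces over the product measure
  have hA : Integrable (fun z : ℝ × ℝ => W z.1 z.2 * g z.1 ^ 2) (μ01.prod μ01) := by
    have hdom : Integrable (fun z : ℝ × ℝ => (g z.1 ^ 2) * (1 : ℝ)) (μ01.prod μ01) :=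
      hg2.mul_prod (integrable_const 1)
    refine hdom.mono' (hWmeas.mul ((hgm.comp measurable_fst).pow_const 2)).aestronglyMeasurable ?_
    filter_upwards [hWb] with z hz
    rw [Real.norm_eq_abs, abs_mul, mul_one, abs_of_nonneg hz.1, abs_of_nonneg (sq_nonneg _)]
    nlinarith [sq_nonneg (g z.1), hz.1, hz.2]
  have hC : Integrable (fun z : ℝ × ℝ => W z.1 z.2 * g z.2 ^ 2) (μ01.prod μ01) := by
    have hdom : Integrable (fun z : ℝ × ℝ => (1 : ℝ) * (g z.2 ^ 2)) (μ01.prod μ01) :=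
      (integrable_const 1).mul_prod hg2
    refine hdom.mono' (hWmeas.mul ((hgm.comp measurable_snd).pow_const 2)).aestronglyMeasurable ?_
    filter_upwards [hWb] with z hz
    rw [Real.norm_eq_abs, abs_mul, one_mul, abs_of_nonneg hz.1, abs_of_nonneg (sq_nonneg _)]
    nlinarith [sq_nonneg (g z.2), hz.1, hz.2]
  have hB : Integrable (fun z : ℝ × ℝ => W z.1 z.2 * (g z.1 * g z.2)) (μ01.prod μ01) := by
    have hdom : Integrable (fun z : ℝ × ℝ => |g z.1| * |g z.2|) (μ01.prod μ01) :=
      hg1.abs.mul_prod hg1.abs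
    refine hdom.mono' (hWmeas.mul ((hgm.comp measurable_fst).mul
      (hgm.comp measurable_snd))).aestronglyMeasurable ?_
    filter_upwards [hWb] with z hz
    rw [Real.norm_eq_abs, abs_mul, abs_mul]
    have h1 : |W z.1 z.2| ≤ 1 := by rw [abs_of_nonneg hz.1]; exact hz.2
    nlinarith [abs_nonneg (g z.1), abs_nonneg (g z.2), abs_nonneg (W z.1 z.2),
      mul_nonneg (abs_nonneg (g z.1)) (abs_nonneg (g z.2))]
  have hΦeq : (fun z : ℝ × ℝ => W z.1 z.2 * (g z.1 - g z.2) ^ 2) =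
      fun z : ℝ × ℝ => W z.1 z.2 * g z.1 ^ 2 - 2 * (W z.1 z.2 * (g z.1 * g z.2))
        + W z.1 z.2 * g z.2 ^ 2 := by
    funext z; ring
  have hPhiInt : Integrable (fun z : ℝ × ℝ => W z.1 z.2 * (g z.1 - g z.2) ^ 2) (μ01.prod μ01) := by
    rw [hΦeq]; exact (hA.sub (hB.const_mul 2)).add hC
  -- the three integrals all equal ∫ f²
  have haeI : ∀ᵐ x ∂μ01, x ∈ I01 := ae_restrict_mem measurableSet_Icc
  have hIA : (∫ z : ℝ × ℝ, W z.1 z.2 * g z.1 ^ 2 ∂(μ01.prod μ01)) = ∫ x, f x ^ 2 ∂μ01 := by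
    rw [integral_prod _ hA]
    refine integral_congr_ae ?_
    filter_upwards [haeI] with x hx
    have hkx : 0 < k x := lt_of_lt_of_le hc (hkc x hx)
    have : (∫ y, W x y * g x ^ 2 ∂μ01) = (∫ y, W x y ∂μ01) * g x ^ 2 :=
      integral_mul_const _ _
    rw [this]
    rw [hgsq x hx]
    show k x * (f x ^ 2 / k x) = f x ^ 2
    field_simp
  have hIC : (∫ z : ℝ × ℝ, W z.1 z.2 * g z.2 ^ 2 ∂(μ01.prod μ01)) = ∫ x, f x ^ 2 ∂μ01 := by
    rw [integral_prod_symm _ hC]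
    refine integral_congr_ae ?_
    filter_upwards [haeI] with y hy
    have hky : 0 < k y := lt_of_lt_of_le hc (hkc y hy)
    have h1 : (∫ x, W x y * g y ^ 2 ∂μ01) = (∫ x, W x y ∂μ01) * g y ^ 2 :=
      integral_mul_const _ _
    have h2 : (∫ x, W x y ∂μ01) = k y := by
      refine integral_congr_ae ?_ |>.trans rfl
      filter_upwards [haeI] with x hx
      exact hWsymm x hx y hy
    rw [h1, h2, hgsq y hy]
    field_simp
  have hIB : (∫ z : ℝ × ℝ, W z.1 z.2 * (g z.1 * g z.2) ∂(μ01.prod μ01)) = ∫ x, f x ^ 2 ∂μ01 := by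
    rw [integral_prod _ hB]
    refine integral_congr_ae ?_
    filter_upwards [haeI, heig] with x hx hfx
    have hkx : 0 < k x := lt_of_lt_of_le hc (hkc x hx)
    have hsx : 0 < Real.sqrt (k x) := Real.sqrt_pos.mpr hkx
    have hin : (∫ y, W x y * (g x * g y) ∂μ01) =
        (g x * Real.sqrt (k x)) * ∫ y, (W x y / Real.sqrt (k x * k y)) * f y ∂μ01 := by
      rw [← integral_const_mul]
      refine integral_congr_ae ?_
      filter_upwards [haeI] with y hy
      have hky : 0 < k y := lt_of_lt_of_le hc (hkc y hy)
      have hsy : 0 < Real.sqrt (k y) := Real.sqrt_pos.mpr hky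
      have hsplit : Real.sqrt (k x * k y) = Real.sqrt (k x) * Real.sqrt (k y) :=
        Real.sqrt_mul hkx.le _
      show W x y * (g x * g y) = g x * Real.sqrt (k x) * (W x y / Real.sqrt (k x * k y) * f y)
      rw [hsplit, hgdef]
      show W x y * (g x * (f y / Real.sqrt (k y))) = _
      have hgx : g x * Real.sqrt (k x) = f x := by
        rw [hgdef]; exact div_mul_cancel₀ _ hsx.ne'
      field_simp
      have hinv : Real.sqrt (k x) * (Real.sqrt (k x))⁻¹ = 1 := mul_inv_cancel₀ hsx.ne'
      linear_combination (W x y * (f y : ℝ) * Real.sqrt (k y)) * hgx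
        + (W x y * (f x : ℝ) * (f y : ℝ) * (1 - Real.sqrt (k y))) * hinv
    rw [hin, ← hfx]
    show g x * Real.sqrt (k x) * f x = f x ^ 2
    rw [hgdef]
    show f x / Real.sqrt (k x) * Real.sqrt (k x) * f x = f x ^ 2
    field_simp
  -- total integral is zero
  have hItot : (∫ z : ℝ × ℝ, W z.1 z.2 * (g z.1 - g z.2) ^ 2 ∂(μ01.prod μ01)) = 0 := by
    rw [hΦeq]
    have h2B : Integrable (fun z : ℝ × ℝ => 2 * (W z.1 z.2 * (g z.1 * g z.2)))
        (μ01.prod μ01) := hB.const_mul 2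
    have hsubInt : Integrable (fun z : ℝ × ℝ =>
        W z.1 z.2 * g z.1 ^ 2 - 2 * (W z.1 z.2 * (g z.1 * g z.2))) (μ01.prod μ01) :=
      hA.sub h2B
    rw [integral_add hsubInt hC, integral_sub hA h2B, integral_const_mul, hIA, hIB, hIC]
    ring
  -- hence the integrand vanishes a.e.
  have hΦnn : 0 ≤ᵐ[μ01.prod μ01] fun z : ℝ × ℝ => W z.1 z.2 * (g z.1 - g z.2) ^ 2 := by
    filter_upwards [hWb] with z hz
    exact mul_nonneg hz.1 (sq_nonneg _)
  have hΦ0 : (fun z : ℝ × ℝ => W z.1 z.2 * (g z.1 - g z.2) ^ 2) =ᵐ[μ01.prod μ01] 0 :=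
    (integral_eq_zero_iff_of_nonneg_ae hΦnn hPhiInt).mp hItot
  -- energy in lintegral form
  have hEg : (∫⁻ x in I01, ∫⁻ y in I01, ENNReal.ofReal (W x y * (g x - g y) ^ 2)) = 0 := by
    have hum : AEMeasurable (Function.uncurry fun x y => ENNReal.ofReal (W x y * (g x - g y) ^ 2))
        (μ01.prod μ01) := by
      apply Measurable.aemeasurable
      apply Measurable.ennreal_ofReal
      exact hWmeas.mul (((hgm.comp measurable_fst).sub (hgm.comp measurable_snd)).pow_const 2)
    rw [lintegral_lintegral hum]
    have : ∀ᵐ z : ℝ × ℝ ∂(μ01.prod μ01),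
        ENNReal.ofReal (W z.1 z.2 * (g z.1 - g z.2) ^ 2) = 0 := by
      filter_upwards [hΦ0] with z hz
      simp only [Pi.zero_apply] at hz
      simp [hz]
    rw [lintegral_congr_ae this]
    simp
  obtain ⟨a, ha⟩ := part1 g hgm hEg
  refine ⟨a, ?_⟩
  filter_upwards [ha, haeI] with x hx hxI
  have hkx : 0 < k x := lt_of_lt_of_le hc (hkc x hxI)
  have hsx : 0 < Real.sqrt (k x) := Real.sqrt_pos.mpr hkx
  have : f x = g x * Real.sqrt (k x) := by
    rw [hgdef]
    exact (div_mul_cancel₀ _ hsx.ne').symm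
  rw [this, hx]
end
end
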